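/- arXiv:1908.08448 — 9 statements merged into one kernel-verified Lean document; each statement's English description precedes it below -/
import Mathlib

section
/- Let n ≥ 1 and let S be a nonempty set of integers i with 1 ≤ i ≤ ⌊(n−1)/2⌋. Define the rotation symmetric quadratic Boolean function Q : (Fin n → ZMod 2) → ZMod 2 by Q(x) = ∑_{i∈S} ∑_{j=0}^{n−1} x_j · x_{(j+i) mod n}, and define its trace form Q' : GaloisField 2 n → ZMod 2 by Q'(x) = Tr(∑_{i∈S} x^(2^i+1)), where Tr is the field trace of GaloisField 2 n over ZMod 2. Then, as integers, (2^n − 2·wt(Q))² = (2^n − 2·wt(Q'))²; in particular Q is balanced if and only if Q' is balanced. -/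
/-- The monomial rotation symmetric quadratic function `(0,t)_n`:
`x ↦ ∑_{j=0}^{n-1} x_j * x_{(j+t) mod n}` over `ZMod 2`. -/
def mrs (n t : ℕ) (x : Fin n → ZMod 2) : ZMod 2 :=
  ∑ j : Fin n, x j * x ⟨(j.val + t) % n, Nat.mod_lt _ j.pos⟩

/-- Hamming weight of a Boolean function in `n` variables. -/
noncomputable def wtB {n : ℕ} (f : (Fin n → ZMod 2) → ZMod 2) : ℕ :=
  Nat.card {x : Fin n → ZMod 2 // f x = 1}

/-- Hamming weight of a function on `GaloisField 2 n`. -/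
noncomputable def wtG (n : ℕ) (g : GaloisField 2 n → ZMod 2) : ℕ :=
  Nat.card {x : GaloisField 2 n // g x = 1}

/-!
For a quadratic form `f` over `𝔽₂` with polar form `B`,
`(∑ₓ (-1)^f(x))² = 2ⁿ ∑_{h ∈ rad B} (-1)^f(h)`, so it suffices to match the radicals of `Q`
and `Q'` together with the values on them.
Writing elements of `𝔽_{2ⁿ}` in a normal basis `(α^{2^j})_{j ∈ ℤ/n}`, the Frobenius becomes the
cyclic shift, and the coordinate map carries the radical of `Q` onto that of `Q'`.
For `h` in the radical, `Q'(∑ hⱼ α^{2^j}) = ∑_d Tr(α · α^{2^d}) m_h(d)` with `m_h` even in `d`.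
The terms `d, -d` cancel in pairs, the term `d = n/2` vanishes because `α · α^{2^{n/2}}` lies in the
subfield of index `2`, and `Tr(α²) = Tr(α) = 1`; what is left is `m_h(0) = Q(h)`.
-/

open Finset

section Walsh

variable {V : Type*} [Fintype V]

def signOf (v : ZMod 2) : ℤ := (-1) ^ v.val

lemma signOf_add_of_ne_zero : ∀ a b : ZMod 2, b ≠ 0 → signOf (a + b) = -signOf a := by decide

def walsh (f : V → ZMod 2) : ℤ := ∑ x, signOf (f x)

lemma card_sub_two_mul_card_eq_walsh (f : V → ZMod 2) :
    (Fintype.card V : ℤ) - 2 * Nat.card {x // f x = 1} = walsh f := by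
  classical
  have hsign : ∀ v : ZMod 2, signOf v = 1 - 2 * if v = 1 then 1 else 0 := by decide
  simp only [walsh, hsign, sum_sub_distrib, ← mul_sum, Nat.card_eq_fintype_card,
    Fintype.card_subtype, sum_boole, card_univ, sum_const, nsmul_eq_mul, mul_one]

variable [AddCommGroup V]

lemma sum_signOf_of_additive (g : V → ZMod 2) (hg : ∀ x y, g (x + y) = g x + g y) :
    ∑ x, signOf (g x) = if ∀ x, g x = 0 then (Fintype.card V : ℤ) else 0 := by
  split_ifs with h
  · simp [h, signOf]
  · push Not at h
    obtain ⟨x₀, hx₀⟩ := h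
    have hshift : ∑ x, signOf (g (x + x₀)) = ∑ x, signOf (g x) :=
      Fintype.sum_equiv (Equiv.addRight x₀) _ _ fun _ => rfl
    simp only [hg, signOf_add_of_ne_zero _ _ hx₀, sum_neg_distrib] at hshift
    linarith

open Classical in
theorem walsh_sq (f : V → ZMod 2) (B : V → V → ZMod 2)
    (hB : ∀ h x y, B h (x + y) = B h x + B h y) (hf : ∀ x h, f (x + h) = f x + f h + B h x) :
    walsh f ^ 2 = Fintype.card V * ∑ h with ∀ x, B h x = 0, signOf (f h) := by
  have hsign : ∀ a b c, signOf a * signOf (a + b + c) = signOf b * signOf c := by decide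
  calc walsh f ^ 2 = ∑ h, ∑ x, signOf (f x) * signOf (f (x + h)) := by
        rw [walsh, sq, sum_mul_sum, eq_comm, sum_comm]
        exact sum_congr rfl fun x _ => Fintype.sum_equiv (Equiv.addLeft x) _ _ fun _ => rfl
    _ = ∑ h, signOf (f h) * ∑ x, signOf (B h x) := by
        simp only [hf, hsign, mul_sum]
    _ = _ := by
        simp only [sum_signOf_of_additive _ (hB _), mul_ite, mul_zero, sum_ite, sum_const_zero,
          add_zero, mul_sum, mul_comm]

end Walsh

lemma sum_eq_apply_zero_of_charTwo {G R : Type*} [AddCommGroup G] [Fintype G] [DecidableEq G]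
    [Ring R] [CharP R 2] (f : G → R) (hneg : ∀ d, f (-d) = f d)
    (htors : ∀ d ≠ 0, d + d = 0 → f d = 0) : ∑ d, f d = f 0 := by
  rw [← add_sum_erase _ _ (mem_univ 0), add_eq_left]
  refine sum_involution (fun d _ => -d) (fun d _ => by rw [hneg, CharTwo.add_self_eq_zero])
    (fun d hd hfd hdd => hfd (htors d (ne_of_mem_erase hd) ?_))
    (fun d hd => mem_erase.2 ⟨neg_ne_zero.2 (ne_of_mem_erase hd), mem_univ _⟩)
    (fun d _ => neg_neg d)
  rwa [neg_eq_iff_add_eq_zero] at hdd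

theorem forall_trace_mul_eq_zero_iff {K L : Type*} [Field K] [Field L] [Algebra K L]
    [FiniteDimensional K L] [Algebra.IsSeparable K L] {c : L} :
    (∀ x, Algebra.trace K L (c * x) = 0) ↔ c = 0 :=
  ⟨fun h => (traceForm_nondegenerate K L).1 c h, fun h x => by simp [h]⟩

theorem FiniteField.trace_pow_card_pow {K L : Type*} [Field K] [Fintype K] [Field L] [Algebra K L]
    [Algebra.IsAlgebraic K L] (x : L) (i : ℕ) :
    Algebra.trace K L (x ^ Fintype.card K ^ i) = Algebra.trace K L x := by
  rw [← Algebra.trace_eq_of_algEquiv (frobeniusAlgEquivOfAlgebraic K L ^ i) x, AlgEquiv.coe_pow,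
    coe_frobeniusAlgEquivOfAlgebraic_iterate]
section RotationSymmetric

variable {n : ℕ} [NeZero n]

def autoCorr (u : ZMod n → ZMod 2) (k : ZMod n) : ZMod 2 :=
  ∑ j, u j * u (j + k)

def rotQuad (S : Finset ℕ) (u : ZMod n → ZMod 2) : ZMod 2 :=
  ∑ i ∈ S, autoCorr u i

def rotPolar (S : Finset ℕ) (h : ZMod n → ZMod 2) (j : ZMod n) : ZMod 2 :=
  ∑ i ∈ S, (h (j + i) + h (j - i))

lemma rotQuad_add (S : Finset ℕ) (x h : ZMod n → ZMod 2) :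
    rotQuad S (x + h) = rotQuad S x + rotQuad S h + rotPolar S h ⬝ᵥ x := by
  have hshift (i : ℕ) : ∑ j, h j * x (j + i) = ∑ j, h (j - i) * x j :=
    Fintype.sum_equiv (Equiv.addRight (i : ZMod n)) _ _ fun j => by simp
  simp only [rotQuad, autoCorr, rotPolar, dotProduct, sum_mul, ← sum_add_distrib]
  rw [sum_comm (s := univ), ← sum_add_distrib]
  refine sum_congr rfl fun i _ => ?_
  simp only [Pi.add_apply, add_mul, mul_add, sum_add_distrib, hshift, mul_comm (x _) (h _)]
  abel

lemma autoCorr_neg (u : ZMod n → ZMod 2) (k : ZMod n) : autoCorr u (-k) = autoCorr u k :=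
  Fintype.sum_equiv (Equiv.subRight k) _ _ fun j => by
    simp [mul_comm, sub_eq_add_neg]

lemma sum_autoCorr_add_neg {S : Finset ℕ} {h : ZMod n → ZMod 2} (hh : rotPolar S h = 0)
    (d : ZMod n) : ∑ i ∈ S, autoCorr h (i + -d) = ∑ i ∈ S, autoCorr h (i + d) := by
  have hsum : ∑ i ∈ S, (autoCorr h (i + d) + autoCorr h (i + -d)) =
      ∑ j, h j * rotPolar S h (j + d) := by
    simp only [rotPolar, mul_sum]
    rw [sum_comm]
    refine sum_congr rfl fun i _ => ?_
    rw [← autoCorr_neg h (i + -d)]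
    simp only [autoCorr, mul_add, sum_add_distrib]
    congr 1 <;> refine sum_congr rfl fun j _ => ?_ <;> congr 2 <;> abel
  rw [eq_comm, ← CharTwo.add_eq_zero, ← sum_add_distrib, hsum, hh]
  simp

lemma ZMod.val_finEquiv_symm (a : ZMod n) : ((ZMod.finEquiv n).symm a).val = a.val := by
  obtain ⟨k, rfl⟩ := Nat.exists_eq_succ_of_ne_zero (NeZero.ne n)
  rfl

lemma rotQuad_comp_finEquiv_symm (S : Finset ℕ) (x : Fin n → ZMod 2) :
    rotQuad S (x ∘ (ZMod.finEquiv n).symm) = ∑ i ∈ S, mrs n i x := by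
  refine sum_congr rfl fun i _ => ?_
  refine Fintype.sum_equiv (ZMod.finEquiv n).symm.toEquiv _ _ fun a => ?_
  simp only [Function.comp_apply, RingEquiv.toEquiv_eq_coe, EquivLike.coe_coe]
  congr 2
  ext
  simp only [ZMod.val_finEquiv_symm, ZMod.val_add, ZMod.val_natCast, Nat.add_mod_mod]

lemma walsh_sum_mrs (S : Finset ℕ) :
    walsh (fun x => ∑ i ∈ S, mrs n i x) = walsh (rotQuad (n := n) S) :=
  Fintype.sum_equiv ((ZMod.finEquiv n).toEquiv.arrowCongr (.refl _)) _ _ fun x =>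
    congrArg signOf (rotQuad_comp_finEquiv_symm S x).symm

end RotationSymmetric

noncomputable instance (n : ℕ) : Fintype (GaloisField 2 n) := Fintype.ofFinite _

namespace GaloisField

variable {n : ℕ}

local notation "Tr" => Algebra.trace (ZMod 2) (GaloisField 2 n)

lemma trace_pow_two_pow (x : GaloisField 2 n) (i : ℕ) : Tr (x ^ 2 ^ i) = Tr x := by
  simpa using FiniteField.trace_pow_card_pow (K := ZMod 2) x i

variable [NeZero n]

lemma card_eq_two_pow : Fintype.card (GaloisField 2 n) = 2 ^ n := by
  rw [Fintype.card_eq_nat_card, GaloisField.card 2 n (NeZero.ne n)]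

lemma pow_two_pow_mul (x : GaloisField 2 n) (k : ℕ) : x ^ 2 ^ (n * k) = x := by
  rw [pow_mul, ← card_eq_two_pow, FiniteField.pow_card_pow]

lemma pow_two_pow_mod (x : GaloisField 2 n) (a : ℕ) : x ^ 2 ^ (a % n) = x ^ 2 ^ a := by
  conv_rhs => rw [← Nat.div_add_mod a n, pow_add, pow_mul, pow_two_pow_mul]

lemma algebraMap_trace_eq_sum_range (x : GaloisField 2 n) :
    algebraMap (ZMod 2) (GaloisField 2 n) (Tr x) = ∑ i ∈ range n, x ^ 2 ^ i := by
  simp [FiniteField.algebraMap_trace_eq_sum_pow, GaloisField.finrank 2 (NeZero.ne n)]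

lemma algebraMap_trace_eq_sum (x : GaloisField 2 n) :
    algebraMap (ZMod 2) (GaloisField 2 n) (Tr x) = ∑ j : ZMod n, x ^ 2 ^ j.val := by
  rw [algebraMap_trace_eq_sum_range]
  exact sum_nbij' (fun i => (i : ZMod n)) ZMod.val (by simp) (by simp [ZMod.val_lt])
    (fun i hi => ZMod.val_cast_of_lt (mem_range.1 hi)) (fun j _ => ZMod.natCast_zmod_val j)
    (fun i hi => by rw [ZMod.val_cast_of_lt (mem_range.1 hi)])

lemma trace_eq_zero_of_pow_two_pow_eq_self {x : GaloisField 2 n} {d : ZMod n} (hd : d ≠ 0)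
    (hdd : d + d = 0) (hx : x ^ 2 ^ d.val = x) : Tr x = 0 := by
  apply (algebraMap (ZMod 2) (GaloisField 2 n)).injective
  rw [algebraMap_trace_eq_sum, map_zero]
  refine sum_ninvolution (· + d) (fun j => ?_) (fun j _ => by simpa using hd) (fun _ => mem_univ _)
    (fun j => by rw [add_assoc, hdd, add_zero])
  rw [ZMod.val_add, pow_two_pow_mod, pow_add, mul_comm, pow_mul, hx, CharTwo.add_self_eq_zero]

lemma exists_linearIndependent_pow_two_pow :
    ∃ α : GaloisField 2 n, LinearIndependent (ZMod 2) fun j : ZMod n => α ^ 2 ^ j.val := by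
  obtain ⟨α, hα⟩ := exists_linearIndependent_algEquiv_apply (ZMod 2) (GaloisField 2 n)
  set σ := FiniteField.frobeniusAlgEquivOfAlgebraic (ZMod 2) (GaloisField 2 n)
  have hσ : orderOf σ = n := by
    rw [FiniteField.orderOf_frobeniusAlgEquivOfAlgebraic, GaloisField.finrank 2 (NeZero.ne n)]
  have hinj : Function.Injective fun j : ZMod n => σ ^ j.val := fun a b hab =>
    ZMod.val_injective n <|
    pow_injOn_Iio_orderOf (by simp [hσ, ZMod.val_lt]) (by simp [hσ, ZMod.val_lt]) hab
  refine ⟨α, ?_⟩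
  convert hα.comp _ hinj with j
  simp [σ, AlgEquiv.coe_pow, FiniteField.coe_frobeniusAlgEquivOfAlgebraic_iterate]

noncomputable def frobeniusBasis : Module.Basis (ZMod n) (ZMod 2) (GaloisField 2 n) :=
  basisOfLinearIndependentOfCardEqFinrank exists_linearIndependent_pow_two_pow.choose_spec
    (by rw [ZMod.card, GaloisField.finrank 2 (NeZero.ne n)])

lemma frobeniusBasis_pow (j : ZMod n) (i : ℕ) :
    frobeniusBasis j ^ 2 ^ i = frobeniusBasis (j + (i : ZMod n)) := by
  simp only [frobeniusBasis, coe_basisOfLinearIndependentOfCardEqFinrank, ← pow_mul, ← pow_add,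
    ZMod.val_add, ZMod.val_natCast, Nat.add_mod_mod, pow_two_pow_mod]

lemma sum_smul_frobeniusBasis_pow (h : ZMod n → ZMod 2) (i : ℕ) :
    (∑ j, h j • frobeniusBasis j) ^ 2 ^ i = ∑ j, h j • frobeniusBasis (j + (i : ZMod n)) := by
  simp only [sum_pow_char_pow, smul_pow, ZMod.pow_card_pow, frobeniusBasis_pow]

noncomputable def ofCoords : (ZMod n → ZMod 2) ≃ₗ[ZMod 2] GaloisField 2 n :=
  frobeniusBasis.equivFun.symm

lemma ofCoords_apply (h : ZMod n → ZMod 2) : ofCoords h = ∑ j, h j • frobeniusBasis j :=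
  frobeniusBasis.equivFun_symm_apply h

noncomputable def traceCorr (d : ZMod n) : ZMod 2 := Tr (frobeniusBasis 0 * frobeniusBasis d)

lemma trace_frobeniusBasis_mul (a c : ZMod n) :
    Tr (frobeniusBasis a * frobeniusBasis c) = traceCorr (c - a) := by
  rw [traceCorr, ← trace_pow_two_pow (frobeniusBasis 0 * _) a.val, mul_pow, frobeniusBasis_pow,
    frobeniusBasis_pow, ZMod.natCast_zmod_val, zero_add, sub_add_cancel]

lemma traceCorr_neg (d : ZMod n) : traceCorr (-d) = traceCorr d := by
  rw [← zero_sub, ← trace_frobeniusBasis_mul, mul_comm, trace_frobeniusBasis_mul, sub_zero]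

lemma traceCorr_zero : traceCorr (0 : ZMod n) = 1 := by
  have hsum : algebraMap (ZMod 2) _ (Tr (frobeniusBasis 0)) = ∑ j : ZMod n, frobeniusBasis j := by
    simp only [algebraMap_trace_eq_sum, frobeniusBasis_pow, zero_add, ZMod.natCast_zmod_val]
  have hne : Tr (frobeniusBasis (0 : ZMod n)) ≠ 0 := fun h0 => by
    have := Fintype.linearIndependent_iff.1 frobeniusBasis.linearIndependent 1
      (by simpa [h0] using hsum.symm) 0
    exact one_ne_zero this
  rw [← trace_pow_two_pow _ 1, pow_one, pow_two] at hne
  exact Fin.eq_one_of_ne_zero _ hne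

lemma traceCorr_eq_zero_of_add_self_eq_zero {d : ZMod n} (hd : d ≠ 0) (hdd : d + d = 0) :
    traceCorr d = 0 := by
  refine trace_eq_zero_of_pow_two_pow_eq_self hd hdd ?_
  rw [mul_pow, frobeniusBasis_pow, frobeniusBasis_pow, ZMod.natCast_zmod_val, zero_add, hdd,
    mul_comm]

noncomputable def trQuad (S : Finset ℕ) (x : GaloisField 2 n) : ZMod 2 :=
  Tr (∑ i ∈ S, x ^ (2 ^ i + 1))

/-- `x ↦ x ^ 2 ^ ((n - 1) * i)` inverts `x ↦ x ^ 2 ^ i`, its adjoint for the trace pairing. -/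
noncomputable def trPolar (S : Finset ℕ) (h : GaloisField 2 n) : GaloisField 2 n :=
  ∑ i ∈ S, (h ^ 2 ^ i + h ^ 2 ^ ((n - 1) * i))

lemma trace_mul_pow_two_pow (x y : GaloisField 2 n) (i : ℕ) :
    Tr (y * x ^ 2 ^ i) = Tr (y ^ 2 ^ ((n - 1) * i) * x) := by
  have hexp : (n - 1) * i + i = n * i := by
    rw [Nat.sub_one_mul, Nat.sub_add_cancel (Nat.le_mul_of_pos_left i (NeZero.pos n))]
  rw [← trace_pow_two_pow (y ^ 2 ^ ((n - 1) * i) * x) i, mul_pow, ← pow_mul, ← pow_add, hexp,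
    pow_two_pow_mul]

lemma trQuad_add (S : Finset ℕ) (x h : GaloisField 2 n) :
    trQuad S (x + h) = trQuad S x + trQuad S h + Tr (trPolar S h * x) := by
  have hterm (i : ℕ) : (x + h) ^ (2 ^ i + 1) =
      x ^ (2 ^ i + 1) + h ^ (2 ^ i + 1) + (h * x ^ 2 ^ i + h ^ 2 ^ i * x) := by
    rw [pow_succ, add_pow_char_pow, pow_succ, pow_succ]
    ring
  simp only [trQuad, trPolar, hterm, sum_add_distrib, map_add, map_sum, sum_mul, add_mul,
    trace_mul_pow_two_pow]
  abel

lemma ofCoords_pow (h : ZMod n → ZMod 2) (i : ℕ) :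
    ofCoords h ^ 2 ^ i = ofCoords fun j => h (j - (i : ZMod n)) := by
  rw [ofCoords_apply, ofCoords_apply, sum_smul_frobeniusBasis_pow]
  exact Fintype.sum_equiv (Equiv.addRight (i : ZMod n)) _ _ fun j => by simp

lemma trPolar_ofCoords (S : Finset ℕ) (h : ZMod n → ZMod 2) :
    trPolar S (ofCoords h) = ofCoords (rotPolar S h) := by
  have hcast (i : ℕ) : (((n - 1) * i : ℕ) : ZMod n) = -i := by
    rw [Nat.cast_mul, Nat.cast_sub NeZero.one_le, ZMod.natCast_self]
    ring
  have hpolar : rotPolar S h =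
      ∑ i ∈ S, ((fun j => h (j - (i : ZMod n))) + fun j => h (j - ((n - 1) * i : ℕ))) := by
    ext j
    simp [rotPolar, hcast, add_comm]
  simp only [trPolar, ofCoords_pow, hpolar, map_sum, map_add]

lemma trace_ofCoords_pow_two_pow_add_one (h : ZMod n → ZMod 2) (i : ℕ) :
    Tr (ofCoords h ^ (2 ^ i + 1)) =
      ∑ d, traceCorr d * autoCorr h ((i : ZMod n) + d) := by
  rw [pow_succ, ofCoords_apply, sum_smul_frobeniusBasis_pow, sum_mul_sum]
  simp only [map_sum, smul_mul_smul_comm, map_smul, trace_frobeniusBasis_mul, smul_eq_mul,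
    autoCorr, mul_sum]
  conv_rhs => rw [sum_comm]
  refine sum_congr rfl fun a _ =>
    (Fintype.sum_equiv (Equiv.addLeft (a + (i : ZMod n))) _ _ fun d => ?_).symm
  rw [Equiv.coe_addLeft, add_sub_cancel_left, mul_comm, ← add_assoc]

lemma trQuad_ofCoords_of_rotPolar_eq_zero {S : Finset ℕ} {h : ZMod n → ZMod 2}
    (hh : rotPolar S h = 0) : trQuad S (ofCoords h) = rotQuad S h := by
  have hexp : trQuad S (ofCoords h) =
      ∑ d, traceCorr d * ∑ i ∈ S, autoCorr h ((i : ZMod n) + d) := by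
    simp only [trQuad, map_sum, trace_ofCoords_pow_two_pow_add_one, mul_sum]
    exact sum_comm
  rw [hexp, sum_eq_apply_zero_of_charTwo _
    (fun d => by rw [traceCorr_neg, sum_autoCorr_add_neg hh])
    (fun d hd hdd => by rw [traceCorr_eq_zero_of_add_self_eq_zero hd hdd, zero_mul]),
    traceCorr_zero, one_mul]
  simp only [add_zero, rotQuad]

theorem walsh_rotQuad_sq_eq_walsh_trQuad_sq (S : Finset ℕ) :
    walsh (rotQuad (n := n) S) ^ 2 = walsh (trQuad (n := n) S) ^ 2 := by
  rw [walsh_sq _ (fun h x => rotPolar S h ⬝ᵥ x) (fun _ _ _ => dotProduct_add _ _ _) (rotQuad_add S),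
    walsh_sq _ (fun h x => Tr (trPolar S h * x)) (fun _ _ _ => by rw [mul_add, map_add])
      (trQuad_add S), Fintype.card_fun, ZMod.card, ZMod.card, card_eq_two_pow]
  congr 1
  refine sum_equiv ofCoords.toEquiv (fun h => ?_) (fun h hh => ?_)
  · simp only [mem_filter, mem_univ, true_and, dotProduct_eq_zero_iff, forall_trace_mul_eq_zero_iff,
      LinearEquiv.coe_toEquiv, trPolar_ofCoords, LinearEquiv.map_eq_zero_iff]
  · simp only [mem_filter, mem_univ, true_and, dotProduct_eq_zero_iff] at hh
    rw [LinearEquiv.coe_toEquiv, trQuad_ofCoords_of_rotPolar_eq_zero hh]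

end GaloisField

lemma eq_two_pow_pred_iff_of_sq_eq {n : ℕ} (hn : 1 ≤ n) {a b : ℕ}
    (h : ((2 : ℤ) ^ n - 2 * a) ^ 2 = ((2 : ℤ) ^ n - 2 * b) ^ 2) :
    a = 2 ^ (n - 1) ↔ b = 2 ^ (n - 1) := by
  obtain ⟨m, rfl⟩ : ∃ m, n = m + 1 := ⟨n - 1, by omega⟩
  have key (c : ℕ) : c = 2 ^ m ↔ ((2 : ℤ) ^ (m + 1) - 2 * c) ^ 2 = 0 := by
    rw [pow_eq_zero_iff two_ne_zero, sub_eq_zero, pow_succ]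
    zify
    omega
  rw [Nat.add_sub_cancel, key, key, h]

theorem walsh_zero_eq_of_trace_form_general
    (n : ℕ) (hn : 1 ≤ n) (S : Finset ℕ)
    (Q : (Fin n → ZMod 2) → ZMod 2)
    (hQ : ∀ x, Q x = ∑ i ∈ S, mrs n i x)
    (Q' : GaloisField 2 n → ZMod 2)
    (hQ' : ∀ x, Q' x =
      Algebra.trace (ZMod 2) (GaloisField 2 n) (∑ i ∈ S, x ^ (2 ^ i + 1))) :
    ((2 : ℤ) ^ n - 2 * wtB Q) ^ 2 = ((2 : ℤ) ^ n - 2 * wtG n Q') ^ 2 ∧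
      (wtB Q = 2 ^ (n - 1) ↔ wtG n Q' = 2 ^ (n - 1)) := by
  have : NeZero n := ⟨by omega⟩
  have hwtB : (2 : ℤ) ^ n - 2 * wtB Q = walsh (rotQuad (n := n) S) := by
    rw [wtB, funext hQ, ← walsh_sum_mrs, ← card_sub_two_mul_card_eq_walsh, Fintype.card_fun,
      ZMod.card, Fintype.card_fin]
    norm_cast
  have hwtG : (2 : ℤ) ^ n - 2 * wtG n Q' = walsh (GaloisField.trQuad (n := n) S) := by
    rw [wtG, funext hQ', ← card_sub_two_mul_card_eq_walsh, GaloisField.card_eq_two_pow]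
    norm_cast
  have hsq : ((2 : ℤ) ^ n - 2 * wtB Q) ^ 2 = ((2 : ℤ) ^ n - 2 * wtG n Q') ^ 2 := by
    rw [hwtB, hwtG, GaloisField.walsh_rotQuad_sq_eq_walsh_trQuad_sq]
  exact ⟨hsq, eq_two_pow_pred_iff_of_sq_eq hn hsq⟩

theorem walsh_zero_eq_of_trace_form
    (n : ℕ) (hn : 1 ≤ n) (S : Finset ℕ) (hS : S.Nonempty)
    (hSrange : ∀ i ∈ S, 1 ≤ i ∧ i ≤ (n - 1) / 2)
    (Q : (Fin n → ZMod 2) → ZMod 2)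
    (hQ : ∀ x, Q x = ∑ i ∈ S, mrs n i x)
    (Q' : GaloisField 2 n → ZMod 2)
    (hQ' : ∀ x, Q' x =
      Algebra.trace (ZMod 2) (GaloisField 2 n) (∑ i ∈ S, x ^ (2 ^ i + 1))) :
    ((2 : ℤ) ^ n - 2 * wtB Q) ^ 2 = ((2 : ℤ) ^ n - 2 * wtG n Q') ^ 2 ∧
      (wtB Q = 2 ^ (n - 1) ↔ wtG n Q' = 2 ^ (n - 1)) :=
  walsh_zero_eq_of_trace_form_general n hn S Q hQ Q' hQ'
end

section
/- For every t ≥ 1 and every n ≥ 4t+2, the Hamming weights of the monomial rotation symmetric quadratic functions (0,t)_m satisfy the linear recursion wt((0,t)_n) + 2^(t+1)·wt((0,t)_{n−2t−1}) = 2·wt((0,t)_{n−1}) + 2^t·wt((0,t)_{n−2t}); that is, the weight sequence satisfies the recursion with recursion polynomial x^(2t+1) − 2x^(2t) − 2^t x + 2^(t+1) = (x−2)(x^(2t) − 2^t). -/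
open Finset

namespace Fin

variable {α : Type*} {m n : ℕ}

theorem append_mk_of_lt (u : Fin m → α) (v : Fin n → α) {j : ℕ} (h : j < m + n) (hj : j < m) :
    append u v ⟨j, h⟩ = u ⟨j, hj⟩ :=
  append_left u v ⟨j, hj⟩

theorem append_mk_of_le (u : Fin m → α) (v : Fin n → α) {j : ℕ} (h : j < m + n) (hj : m ≤ j) :
    append u v ⟨j, h⟩ = v ⟨j - m, by omega⟩ := by
  rw [← append_right u v]
  congr 1
  ext
  simp
  omega

theorem sum_append_eq_sum_sum {M : Type*} [AddCommMonoid M] [Fintype α]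
    (f : (Fin (m + n) → α) → M) :
    ∑ x, f x = ∑ u : Fin m → α, ∑ v : Fin n → α, f (append u v) := by
  rw [← (appendEquiv m n).sum_comp, Fintype.sum_prod_type]
  rfl

end Fin

theorem AddChar.map_sum_eq_prod {ι A M : Type*} [AddCommMonoid A] [CommMonoid M]
    (ψ : AddChar A M) (s : Finset ι) (f : ι → A) : ψ (∑ i ∈ s, f i) = ∏ i ∈ s, ψ (f i) := by
  classical
  induction s using Finset.induction_on with
  | empty => simp
  | insert i s hi ih => rw [sum_insert hi, prod_insert hi, AddChar.map_add_eq_mul, ih]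

local notation "ψ" => AddChar.zmodChar 2 (neg_one_sq : (-1 : ℤ) ^ 2 = 1)

def imbalance {n : ℕ} (f : (Fin n → ZMod 2) → ZMod 2) : ℤ :=
  ∑ x, ψ (f x)

theorem two_mul_wtB_add_imbalance {n : ℕ} (f : (Fin n → ZMod 2) → ZMod 2) :
    2 * (wtB f : ℤ) + imbalance f = 2 ^ n := by
  have hψ : ∀ a : ZMod 2, ψ a = 1 - 2 * if a = 1 then 1 else 0 := by decide
  simp only [imbalance, wtB, Nat.card_eq_fintype_card, Fintype.card_subtype, hψ, sum_sub_distrib,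
    ← mul_sum, sum_boole]
  simp

theorem sum_sum_zmodChar_sum_add_mul_add {ι : Type*} [Fintype ι] [DecidableEq ι]
    (a b : ι → ZMod 2) :
    ∑ u : ι → ZMod 2, ∑ v : ι → ZMod 2, ψ (∑ i, (a i + v i) * (b i + u i)) =
      2 ^ Fintype.card ι := by
  calc _ = ∑ u : ι → ZMod 2, ∑ v : ι → ZMod 2, ∏ i, ψ (u i * v i) :=
        Fintype.sum_equiv (Equiv.addLeft b) _ _ fun u =>
          Fintype.sum_equiv (Equiv.addLeft a) _ _ fun v => by
            simp [AddChar.map_sum_eq_prod, mul_comm]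
    _ = ∏ _i : ι, ∑ c : ZMod 2 × ZMod 2, ψ (c.1 * c.2) := by
        rw [Fintype.prod_sum, ← Fintype.sum_prod_type']
        exact Fintype.sum_equiv (Equiv.arrowProdEquivProdArrow _ _ _).symm _ _ fun _ => rfl
    _ = 2 ^ Fintype.card ι := by
        rw [show ∑ c : ZMod 2 × ZMod 2, ψ (c.1 * c.2) = 2 by decide, prod_const, card_univ]

theorem mrs_append {k t : ℕ} (x : Fin (k + t) → ZMod 2) (u v : Fin t → ZMod 2) :
    mrs (k + t + (t + t)) t (Fin.append x (Fin.append u v)) =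
      mrs (k + t) t x +
        ∑ i, (x (Fin.natAdd k i) + v i) * (x (Fin.castLE (Nat.le_add_left t k) i) + u i) := by
  -- Split `Fin (k + t + (t + t))` into blocks of sizes `k, t, t, t`: the shift by `t` sends
  -- `x (natAdd k i)` to `u i`, `u i` to `v i`, and `v i` around to `x i`.
  unfold mrs
  rw [Fin.sum_univ_add, Fin.sum_univ_add, Fin.sum_univ_add (a := k), Fin.sum_univ_add (a := t)]
  simp (disch := omega) only [Fin.val_castAdd, Fin.val_natAdd, Nat.mod_eq_of_lt,
    Nat.mod_eq_sub_mod, Fin.append_mk_of_lt, Fin.append_mk_of_le, Fin.append_left,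
    Fin.append_right]
  simp only [add_assoc, Nat.sub_add_eq, add_tsub_cancel_left, add_tsub_cancel_right, Fin.eta,
    Fin.castLE, add_right_inj]
  have char_two : ∀ a b u v : ZMod 2, a * u + (u * v + v * b) = a * b + (a + v) * (b + u) := by
    decide
  simp only [← sum_add_distrib, char_two]

theorem imbalance_mrs_add_two_mul {m t : ℕ} (h : t ≤ m) :
    imbalance (mrs (m + 2 * t) t) = 2 ^ t * imbalance (mrs m t) := by
  obtain ⟨k, rfl⟩ := Nat.exists_eq_add_of_le' h
  rw [two_mul, imbalance, imbalance]
  simp only [Fin.sum_append_eq_sum_sum (m := k + t), Fin.sum_append_eq_sum_sum (m := t),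
    mrs_append, AddChar.map_add_eq_mul, ← mul_sum, sum_sum_zmodChar_sum_add_mul_add,
    Fintype.card_fin, ← sum_mul]
  exact mul_comm _ _

theorem mrs_weight_recursion_general (t n : ℕ) (hn : 4 * t + 2 ≤ n) :
    wtB (mrs n t) + 2 ^ (t + 1) * wtB (mrs (n - (2 * t + 1)) t) =
      2 * wtB (mrs (n - 1) t) + 2 ^ t * wtB (mrs (n - 2 * t) t) := by
  obtain ⟨m, rfl⟩ : ∃ m, n = m + 1 + 2 * t := ⟨n - (2 * t + 1), by omega⟩
  rw [show m + 1 + 2 * t - (2 * t + 1) = m by omega, show m + 1 + 2 * t - 1 = m + 2 * t by omega,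
    show m + 1 + 2 * t - 2 * t = m + 1 by omega]
  have hI₁ := imbalance_mrs_add_two_mul (m := m + 1) (t := t) (by omega)
  have hI₂ := imbalance_mrs_add_two_mul (m := m) (t := t) (by omega)
  have hw (k : ℕ) := two_mul_wtB_add_imbalance (mrs k t)
  qify at hI₁ hI₂ hw ⊢
  linear_combination (1 / 2 : ℚ) * hw (m + 1 + 2 * t) + 2 ^ t * hw m - hw (m + 2 * t)
    - 2 ^ t / 2 * hw (m + 1) - hI₁ / 2 + hI₂

/-- The weights of `(0,t)_n` satisfy the linear recursion with recursion polynomial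
`(x-2)(x^(2t) - 2^t) = x^(2t+1) - 2x^(2t) - 2^t x + 2^(t+1)`. -/
theorem mrs_weight_recursion (t n : ℕ) (ht : 1 ≤ t) (hn : 4 * t + 2 ≤ n) :
    wtB (mrs n t) + 2 ^ (t + 1) * wtB (mrs (n - (2 * t + 1)) t) =
      2 * wtB (mrs (n - 1) t) + 2 ^ t * wtB (mrs (n - 2 * t) t) :=
  mrs_weight_recursion_general t n hn
end

section
/- Let n ≥ 1 and let f : (Fin n → ZMod 2) → ZMod 2 be a quadratic Boolean function, i.e. f(x) = ∑_{i<j} b_{i,j}·x_i·x_j + ∑_i c_i·x_i + c₀ for some coefficients b_{i,j}, c_i, c₀ ∈ ZMod 2. Then f is balanced if and only if there exists an f-parity-reversing vector, i.e. some a ∈ (Fin n → ZMod 2) with f(x + a) = f(x) + 1 for all x. -/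
/-!
Write `S(f) = ∑ₓ (-1)^f(x)`, so that `S(f) = 2ⁿ - 2 wt(f)` and `f` is balanced iff `S(f) = 0`.
A parity-reversing vector `a` pairs `x` with `x + a` and forces `S(f) = -S(f)`. Conversely,
`S(f)² = ∑ₐ ∑ₓ (-1)^(f(x + a) - f(x))`, and for quadratic `f` each derivative `x ↦ f(x + a) - f(x)`
is affine, so its inner sum is `0` unless the derivative is constant. If no `a` is parity-reversing,
that constant is `0`, so every inner sum is nonnegative while the one at `a = 0` is `2ⁿ`; hence
`S(f) ≠ 0`.
-/

open Finset fwdDiff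

lemma ZMod.eq_add_one_of_ne_mod_two : ∀ {u v : ZMod 2}, u ≠ v → u = v + 1 := by decide

def signChar : AddChar (ZMod 2) ℤ := AddChar.zmodChar 2 neg_one_sq

lemma signChar_one : signChar 1 = -1 := rfl

lemma signChar_eq_one_of_ne_one : ∀ {v : ZMod 2}, v ≠ 1 → signChar v = 1 := by decide

lemma signChar_sub (u v : ZMod 2) : signChar (u - v) = signChar u * signChar v := by
  rw [sub_eq_add_neg, ZMod.neg_eq_self_mod_two, AddChar.map_add_eq_mul]

lemma sum_signChar_eq_card_sub {α : Type*} [Fintype α] (g : α → ZMod 2) :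
    ∑ x, signChar (g x) = Fintype.card α - 2 * Nat.card {x // g x = 1} := by
  classical
  have hsign : ∀ v : ZMod 2, signChar v = 1 - 2 * if v = 1 then 1 else 0 := by decide
  simp only [hsign, sum_sub_distrib, ← mul_sum, sum_boole]
  simp [Nat.card_eq_fintype_card, Fintype.card_subtype]

lemma eq_const_or_exists_forall_add_eq_add_one {V : Type*} [Add V] [Zero V] {g : V → ZMod 2}
    (hg : ∀ x y, g (x + y) + g 0 = g x + g y) :
    (∀ x, g x = g 0) ∨ ∃ x₀, ∀ x, g (x + x₀) = g x + 1 := by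
  by_cases hconst : ∀ x, g x = g 0
  · exact Or.inl hconst
  · obtain ⟨x₀, hx₀⟩ := not_forall.mp hconst
    exact Or.inr ⟨x₀, fun x => by
      linear_combination hg x x₀ + ZMod.eq_add_one_of_ne_mod_two hx₀⟩

/-- For `V = (Fin n → ZMod 2)` and `R = ZMod 2` these are the Boolean functions of degree at
most two. -/
def HasAffineFwdDiff {V R : Type*} [AddCommMonoid V] [AddCommGroup R] (f : V → R) : Prop :=
  ∀ a x y, Δ_[a] f (x + y) + Δ_[a] f 0 = Δ_[a] f x + Δ_[a] f y

namespace HasAffineFwdDiff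

variable {V R : Type*} [AddCommMonoid V]

section AddCommGroup

variable [AddCommGroup R]

lemma const (c : R) : HasAffineFwdDiff fun _ : V => c := by
  simp [HasAffineFwdDiff]

lemma of_map_add {u : V → R} (hu : ∀ x y, u (x + y) = u x + u y) : HasAffineFwdDiff u := by
  have hu0 : u 0 = 0 := by simpa using hu 0 0
  intro a x y
  simp only [fwdDiff, hu, hu0, zero_add]
  abel

lemma add {f g : V → R} (hf : HasAffineFwdDiff f) (hg : HasAffineFwdDiff g) :
    HasAffineFwdDiff fun x => f x + g x := by
  intro a x y
  change Δ_[a] (f + g) (x + y) + Δ_[a] (f + g) 0 = Δ_[a] (f + g) x + Δ_[a] (f + g) y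
  simp only [fwdDiff_add, Pi.add_apply]
  rw [add_add_add_comm, hf a x y, hg a x y]
  abel

lemma sum {ι : Type*} (s : Finset ι) {f : ι → V → R} (hf : ∀ i ∈ s, HasAffineFwdDiff (f i)) :
    HasAffineFwdDiff fun x => ∑ i ∈ s, f i x := by
  intro a x y
  simp only [fwdDiff, ← sum_sub_distrib, ← sum_add_distrib]
  exact sum_congr rfl fun i hi => hf i hi a x y

end AddCommGroup

lemma mul [CommRing R] {u v : V → R} (hu : ∀ x y, u (x + y) = u x + u y)
    (hv : ∀ x y, v (x + y) = v x + v y) : HasAffineFwdDiff fun x => u x * v x := by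
  have hu0 : u 0 = 0 := by simpa using hu 0 0
  intro a x y
  simp only [fwdDiff, hu, hv, hu0, zero_add]
  ring

end HasAffineFwdDiff

section AddCommGroup

variable {V : Type*} [AddCommGroup V] [Fintype V]

lemma sum_signChar_eq_zero_of_forall_add_eq_add_one {g : V → ZMod 2} {a : V}
    (h : ∀ x, g (x + a) = g x + 1) : ∑ x, signChar (g x) = 0 := by
  have hneg : ∑ x, signChar (g x) = -∑ x, signChar (g x) :=
    calc ∑ x, signChar (g x) = ∑ x, signChar (g (x + a)) :=
          (Equiv.sum_comp (Equiv.addRight a) fun y => signChar (g y)).symm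
      _ = -∑ x, signChar (g x) := by
          simp [h, AddChar.map_add_eq_mul, signChar_one]
  linarith

lemma sum_signChar_sq (f : V → ZMod 2) :
    (∑ x, signChar (f x)) ^ 2 = ∑ a, ∑ x, signChar (Δ_[a] f x) :=
  calc (∑ x, signChar (f x)) ^ 2 = ∑ x, ∑ y, signChar (f x) * signChar (f y) := by
        rw [sq, sum_mul_sum]
    _ = ∑ x, ∑ a, signChar (f x) * signChar (f (x + a)) :=
        sum_congr rfl fun x _ =>
          (Equiv.sum_comp (Equiv.addLeft x) fun y => signChar (f x) * signChar (f y)).symm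
    _ = ∑ x, ∑ a, signChar (Δ_[a] f x) := by simp only [fwdDiff, signChar_sub, mul_comm]
    _ = ∑ a, ∑ x, signChar (Δ_[a] f x) := sum_comm

lemma sum_signChar_fwdDiff_nonneg {f : V → ZMod 2} (hf : HasAffineFwdDiff f)
    (hno : ¬∃ a, ∀ x, f (x + a) = f x + 1) (a : V) : 0 ≤ ∑ x, signChar (Δ_[a] f x) := by
  rcases eq_const_or_exists_forall_add_eq_add_one (hf a) with hconst | ⟨x₀, hx₀⟩
  · have hc : Δ_[a] f 0 ≠ 1 := fun hc =>
      hno ⟨a, fun x => sub_eq_iff_eq_add'.mp ((hconst x).trans hc)⟩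
    simp [hconst, signChar_eq_one_of_ne_one hc]
  · exact (sum_signChar_eq_zero_of_forall_add_eq_add_one hx₀).ge

theorem exists_forall_add_eq_add_one_iff_sum_signChar_eq_zero {f : V → ZMod 2}
    (hf : HasAffineFwdDiff f) :
    (∃ a, ∀ x, f (x + a) = f x + 1) ↔ ∑ x, signChar (f x) = 0 := by
  refine ⟨fun ⟨a, ha⟩ => sum_signChar_eq_zero_of_forall_add_eq_add_one ha, fun hS => ?_⟩
  by_contra hno
  have hpos : 0 < ∑ a, ∑ x, signChar (Δ_[a] f x) :=
    calc (0 : ℤ) < Fintype.card V := by exact_mod_cast Fintype.card_pos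
      _ = ∑ x, signChar (Δ_[0] f x) := by simp [fwdDiff]
      _ ≤ ∑ a, ∑ x, signChar (Δ_[a] f x) :=
        single_le_sum (fun a _ => sum_signChar_fwdDiff_nonneg hf hno a) (mem_univ 0)
  rw [← sum_signChar_sq, hS] at hpos
  simp at hpos

end AddCommGroup

/-- A quadratic Boolean function is balanced iff it admits a parity-reversing vector. -/
theorem quadratic_balanced_iff_parity_reversing
    (n : ℕ) (hn : 1 ≤ n) (f : (Fin n → ZMod 2) → ZMod 2)
    (b : Fin n → Fin n → ZMod 2) (c : Fin n → ZMod 2) (c₀ : ZMod 2)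
    (hf : ∀ x, f x =
      (∑ i : Fin n, ∑ j ∈ Finset.univ.filter (fun j : Fin n => i < j), b i j * x i * x j) +
        (∑ i : Fin n, c i * x i) + c₀) :
    wtB f = 2 ^ (n - 1) ↔ ∃ a : Fin n → ZMod 2, ∀ x, f (x + a) = f x + 1 := by
  have hquad : HasAffineFwdDiff f := by
    rw [funext hf]
    refine ((HasAffineFwdDiff.sum _ fun i _ => HasAffineFwdDiff.sum _ fun j _ => ?_).add
      (HasAffineFwdDiff.sum _ fun i _ => ?_)).add (HasAffineFwdDiff.const c₀)
    · exact HasAffineFwdDiff.mul (fun x y => by simp [mul_add]) (fun x y => rfl)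
    · exact HasAffineFwdDiff.of_map_add fun x y => by simp [mul_add]
  rw [exists_forall_add_eq_add_one_iff_sum_signChar_eq_zero hquad, sum_signChar_eq_card_sub]
  obtain ⟨m, rfl⟩ : ∃ m, n = m + 1 := ⟨n - 1, by omega⟩
  simp only [wtB, Fintype.card_fun, ZMod.card, Fintype.card_fin, add_tsub_cancel_right]
  rw [pow_succ, sub_eq_zero]
  omega
end

section
/- For every t ≥ 1 and every n ≥ 2t+1, in the polynomial ring (ZMod 2)[X] the degree of gcd(X^n − 1, X^t + X^(n−t)) equals gcd(2t, n); that is, the v-value v(n) of (0,t)_n satisfies v(n) = gcd(2t, n). -/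
open Polynomial

private lemma gcd_X_pow_sub_one (m n : ℕ) :
    Associated (EuclideanDomain.gcd ((X : (ZMod 2)[X]) ^ m - 1) ((X : (ZMod 2)[X]) ^ n - 1))
      ((X : (ZMod 2)[X]) ^ (Nat.gcd m n) - 1) := by
  induction m, n using Nat.gcd.induction with
  | H0 n =>
    simp only [pow_zero, sub_self, EuclideanDomain.gcd_zero_left, Nat.gcd_zero_left]
    exact Associated.refl _
  | H1 m n hm ih =>
    rw [Nat.gcd_rec]
    refine Associated.trans ?_ ih
    have hd : ((X : (ZMod 2)[X]) ^ m - 1) ∣ (X ^ n - X ^ (n % m)) := by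
      have : (X : (ZMod 2)[X]) ^ n = ((X : (ZMod 2)[X]) ^ m) ^ (n / m) * X ^ (n % m) := by
        rw [← pow_mul, ← pow_add, Nat.div_add_mod]
      rw [this, show ((X : (ZMod 2)[X]) ^ m) ^ (n / m) * X ^ (n % m) - X ^ (n % m)
          = (((X : (ZMod 2)[X]) ^ m) ^ (n / m) - 1) * X ^ (n % m) by ring]
      exact Dvd.dvd.mul_right (by simpa using sub_dvd_pow_sub_pow ((X : (ZMod 2)[X]) ^ m) 1 (n / m)) _
    apply associated_of_dvd_dvd
    · apply EuclideanDomain.dvd_gcd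
      · have h1 := EuclideanDomain.gcd_dvd_right ((X : (ZMod 2)[X]) ^ m - 1) (X ^ n - 1)
        have h2 := (EuclideanDomain.gcd_dvd_left ((X : (ZMod 2)[X]) ^ m - 1) (X ^ n - 1)).trans hd
        have := dvd_sub h1 h2
        simpa using this
      · exact EuclideanDomain.gcd_dvd_left _ _
    · apply EuclideanDomain.dvd_gcd
      · exact EuclideanDomain.gcd_dvd_right _ _
      · have h1 := EuclideanDomain.gcd_dvd_left ((X : (ZMod 2)[X]) ^ (n % m) - 1) (X ^ m - 1)
        have h2 := (EuclideanDomain.gcd_dvd_right ((X : (ZMod 2)[X]) ^ (n % m) - 1) (X ^ m - 1)).trans hd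
        have := dvd_add h1 h2
        simpa using this

/-- The `v`-value of `(0,t)_n`: `deg gcd(X^n - 1, X^t + X^(n-t)) = gcd(2t, n)`. -/
theorem v_value_eq_gcd (t n : ℕ) (ht : 1 ≤ t) (hn : 2 * t + 1 ≤ n) :
    (EuclideanDomain.gcd ((X : (ZMod 2)[X]) ^ n - 1)
        ((X : (ZMod 2)[X]) ^ t + (X : (ZMod 2)[X]) ^ (n - t))).natDegree =
      Nat.gcd (2 * t) n := by
  have hfac : (X : (ZMod 2)[X]) ^ t + X ^ (n - t)
      = X ^ t * (X ^ (n - 2 * t) - 1) := by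
    rw [mul_sub, mul_one, ← pow_add, show t + (n - 2 * t) = n - t by omega,
      CharTwo.sub_eq_add, add_comm]
  rw [hfac]
  have hcop : IsCoprime ((X : (ZMod 2)[X]) ^ n - 1) (X ^ t) := by
    apply IsCoprime.pow_right
    exact ⟨-1, X ^ (n - 1), by
      rw [← pow_succ, show n - 1 + 1 = n by omega]; ring⟩
  have hassoc1 : Associated
      (EuclideanDomain.gcd ((X : (ZMod 2)[X]) ^ n - 1) (X ^ t * (X ^ (n - 2 * t) - 1)))
      (EuclideanDomain.gcd ((X : (ZMod 2)[X]) ^ n - 1) (X ^ (n - 2 * t) - 1)) := by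
    apply associated_of_dvd_dvd
    · apply EuclideanDomain.dvd_gcd (EuclideanDomain.gcd_dvd_left _ _)
      have hg := EuclideanDomain.gcd_dvd_right ((X : (ZMod 2)[X]) ^ n - 1)
        (X ^ t * (X ^ (n - 2 * t) - 1))
      have hcop' : IsCoprime
          (EuclideanDomain.gcd ((X : (ZMod 2)[X]) ^ n - 1) (X ^ t * (X ^ (n - 2 * t) - 1)))
          ((X : (ZMod 2)[X]) ^ t) :=
        hcop.of_isCoprime_of_dvd_left (EuclideanDomain.gcd_dvd_left _ _)
      exact hcop'.dvd_of_dvd_mul_left hg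
    · exact EuclideanDomain.dvd_gcd (EuclideanDomain.gcd_dvd_left _ _)
        ((EuclideanDomain.gcd_dvd_right _ _).mul_left _)
  have hassoc2 := gcd_X_pow_sub_one n (n - 2 * t)
  have hgcd : Nat.gcd n (n - 2 * t) = Nat.gcd (2 * t) n :=
    calc Nat.gcd n (n - 2 * t) = Nat.gcd (n - 2 * t) n := Nat.gcd_comm _ _
      _ = Nat.gcd (n - 2 * t) (n - 2 * t + 2 * t) := by rw [show n - 2*t + 2*t = n by omega]
      _ = Nat.gcd (n - 2 * t) (2 * t) := Nat.gcd_self_add_right _ _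
      _ = Nat.gcd (2 * t) (n - 2 * t) := Nat.gcd_comm _ _
      _ = Nat.gcd (2 * t) n := Nat.gcd_sub_self_right (by omega)
  have := (hassoc1.trans hassoc2)
  rw [hgcd] at this
  rw [natDegree_eq_of_degree_eq (degree_eq_degree_of_associated this)]
  rw [show (1 : (ZMod 2)[X]) = C 1 by simp, natDegree_X_pow_sub_C]
end

section
/- Let t ≥ 1 and n ≥ 2t+1, and let ν(t) denote the 2-adic valuation of t. The function (0,t)_n is balanced if and only if 2^(ν(t)+1) does not divide n. In particular, (0,t)_n is always balanced when n is odd. -/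
/-
Write `χ a = (-1)^a` and `S f = ∑ₓ χ (f x)`, so that `f` is balanced iff `S f = 0`. If the
polar form `B x z = f (x + z) + f x + f z` is additive in `x`, then expanding `(S f)²` and
summing the characters `χ (B · z)` gives `(S f)² = 2ⁿ ∑_{z ∈ rad f} χ (f z)`, while `f` is
additive on the radical. Hence `S f = 0` iff `f` takes the value `1` somewhere on the radical.

For `f = (0,t)_n` the radical consists of the `z` with `z (j + 2t) = z j`. If `2^(ν t + 1) ∣ n`,
then for such `z` the sequence `z k * z (k + t)` has periods `t` and `n`; writing
`t = 2^(ν t) u` and `n = 2^(ν t) v` with `u` odd and `v` even, its sum over the first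
`n u = t v` terms is both `u • f z = f z` and `v • (…) = 0`, so `f` vanishes on the radical.
Otherwise `2^(ν n) ∣ t`, and the indicator of the multiples of `2^(ν n)` lies in the radical
and has `f`-value `n / 2^(ν n)`, which is odd.
-/

open Finset Function Fin.NatCast

namespace BooleanFunction

def sign (a : ZMod 2) : ℤ := if a = 0 then 1 else -1

theorem sign_add : ∀ a b : ZMod 2, sign (a + b) = sign a * sign b := by decide

theorem sign_mul_self : ∀ a : ZMod 2, sign a * sign a = 1 := by decide

theorem eq_one_of_ne_zero : ∀ {a : ZMod 2}, a ≠ 0 → a = 1 := by decide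

theorem eq_zero_of_ne_one : ∀ {a : ZMod 2}, a ≠ 1 → a = 0 := by decide

theorem sign_zero : sign 0 = 1 := rfl

theorem sign_add_one (a : ZMod 2) : sign (a + 1) = -sign a := by
  revert a; decide

section WalshSum

variable {α : Type*} [Fintype α]

def walshSum (f : α → ZMod 2) : ℤ := ∑ x, sign (f x)

theorem walshSum_eq_card_sub_two_mul_card (f : α → ZMod 2) :
    walshSum f = Fintype.card α - 2 * #{x | f x = 1} := by
  have hsplit := card_filter_add_card_filter_not (s := univ) (fun x => f x = 1)
  have hsign : ∀ x, sign (f x) = if f x = 1 then -1 else 1 := fun x => by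
    generalize f x = a; revert a; decide
  simp only [walshSum, hsign, sum_ite, sum_const, card_univ] at hsplit ⊢
  push_cast [← hsplit]
  ring

variable [AddCommGroup α]

theorem walshSum_eq_zero_of_add_eq_add_one {f : α → ZMod 2} (y : α)
    (h : ∀ x, f (x + y) = f x + 1) : walshSum f = 0 := by
  have hshift : walshSum f = ∑ x, sign (f (x + y)) :=
    (Fintype.sum_equiv (Equiv.addRight y) _ _ fun _ => rfl).symm
  simp only [h, sign_add_one, sum_neg_distrib] at hshift
  rw [walshSum] at *
  omega

theorem sum_sign_addMonoidHom (φ : α →+ ZMod 2) :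
    ∑ x, sign (φ x) = if φ = 0 then (Fintype.card α : ℤ) else 0 := by
  split_ifs with hφ
  · simp [hφ, sign_zero]
  · obtain ⟨y, hy⟩ := DFunLike.ne_iff.mp hφ
    exact walshSum_eq_zero_of_add_eq_add_one (f := φ) y fun x => by
      rw [map_add, eq_one_of_ne_zero hy]

end WalshSum

section Polar

variable {G : Type*} [AddCommGroup G]

def polar (f : G → ZMod 2) (x z : G) : ZMod 2 := f (x + z) + f x + f z

theorem apply_add_eq_add_add_polar (f : G → ZMod 2) (x z : G) :
    f (x + z) = f x + f z + polar f x z := by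
  rw [polar]; generalize f (x + z) = a; generalize f x = b; generalize f z = c
  revert a b c; decide

variable [Fintype G]

def radical (f : G → ZMod 2) : Finset G := {z | ∀ x, polar f x z = 0}

variable {f : G → ZMod 2}

theorem apply_add_of_mem_radical {z : G} (hz : z ∈ radical f) (x : G) :
    f (x + z) = f x + f z := by
  rw [apply_add_eq_add_add_polar f x z, (mem_filter.mp hz).2 x, add_zero]

theorem zero_mem_radical (hpolar : ∀ z x y, polar f (x + y) z = polar f x z + polar f y z) :
    (0 : G) ∈ radical f := by
  have hf0 : f 0 = 0 := by simpa [polar, CharTwo.add_self_eq_zero] using hpolar 0 0 0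
  exact mem_filter.mpr ⟨mem_univ _, fun x => by simp [polar, hf0, CharTwo.add_self_eq_zero]⟩

theorem walshSum_sq (hpolar : ∀ z x y, polar f (x + y) z = polar f x z + polar f y z) :
    walshSum f ^ 2 = Fintype.card G * ∑ z ∈ radical f, sign (f z) := by
  let φ (z : G) : G →+ ZMod 2 := AddMonoidHom.mk' (polar f · z) (hpolar z)
  have hφ (z : G) : φ z = 0 ↔ ∀ x, polar f x z = 0 := DFunLike.ext_iff
  calc walshSum f ^ 2 = ∑ x, ∑ z, sign (f x) * sign (f (x + z)) := by
        rw [sq, walshSum, sum_mul_sum]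
        exact sum_congr rfl fun x _ =>
          (Fintype.sum_equiv (Equiv.addLeft x) _ _ fun _ => rfl).symm
    _ = ∑ z, sign (f z) * ∑ x, sign (φ z x) := by
        rw [sum_comm]
        refine sum_congr rfl fun z _ => ?_
        rw [mul_sum]
        refine sum_congr rfl fun x _ => ?_
        rw [apply_add_eq_add_add_polar f x z, sign_add, sign_add, ← mul_assoc, ← mul_assoc,
          sign_mul_self, one_mul]
        rfl
    _ = Fintype.card G * ∑ z ∈ radical f, sign (f z) := by
        rw [mul_sum, radical, sum_filter]
        refine sum_congr rfl fun z _ => ?_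
        simp only [sum_sign_addMonoidHom, hφ, mul_ite, mul_zero, mul_comm]

theorem walshSum_eq_zero_iff (hpolar : ∀ z x y, polar f (x + y) z = polar f x z + polar f y z) :
    walshSum f = 0 ↔ ∃ z ∈ radical f, f z = 1 := by
  refine ⟨fun h => ?_, fun ⟨z, hz, hfz⟩ => ?_⟩
  · by_contra! hne
    have hsq := walshSum_sq hpolar
    rw [h, sum_congr rfl fun z hz => by
      rw [eq_zero_of_ne_one (hne z hz), sign_zero], sum_const, nsmul_one] at hsq
    have hpos : (0 : ℤ) < Fintype.card G * #(radical f) := by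
      have := card_pos.mpr ⟨0, zero_mem_radical hpolar⟩
      have := Fintype.card_pos (α := G)
      positivity
    simp [← hsq] at hpos
  · exact walshSum_eq_zero_of_add_eq_add_one z fun x => by
      rw [apply_add_of_mem_radical hz, hfz]

end Polar

end BooleanFunction

open BooleanFunction

theorem wtB_eq_two_pow_pred_iff {n : ℕ} (hn : n ≠ 0) (f : (Fin n → ZMod 2) → ZMod 2) :
    wtB f = 2 ^ (n - 1) ↔ walshSum f = 0 := by
  obtain ⟨k, rfl⟩ := Nat.exists_eq_succ_of_ne_zero hn
  rw [walshSum_eq_card_sub_two_mul_card, wtB, Nat.card_eq_fintype_card, Fintype.card_subtype]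
  simp only [Fintype.card_fun, ZMod.card, Fintype.card_fin, Nat.succ_sub_one, pow_succ]
  omega

theorem Function.Periodic.sum_range_mul_eq_nsmul {M : Type*} [AddCommMonoid M] {h : ℕ → M}
    {p : ℕ} (hp : Periodic h p) (k : ℕ) :
    ∑ j ∈ range (p * k), h j = k • ∑ j ∈ range p, h j := by
  induction k with
  | zero => simp
  | succ k ih =>
    rw [mul_add_one, sum_range_add, ih, succ_nsmul]
    congr 1
    refine sum_congr rfl fun j _ => ?_
    simpa [add_comm, mul_comm] using hp.nat_mul k j

theorem Function.Periodic.nsmul_sum_range_eq {M : Type*} [AddCommMonoid M] {h : ℕ → M}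
    {p q a b : ℕ} (hp : Periodic h p) (hq : Periodic h q) (hpq : p * a = q * b) :
    a • ∑ j ∈ range p, h j = b • ∑ j ∈ range q, h j := by
  rw [← hp.sum_range_mul_eq_nsmul, ← hq.sum_range_mul_eq_nsmul, hpq]

theorem exists_eq_two_pow_padicValNat_mul_odd {n : ℕ} (hn : n ≠ 0) :
    ∃ m, n = 2 ^ padicValNat 2 n * m ∧ Odd m := by
  obtain ⟨m, hm⟩ := pow_padicValNat_dvd (p := 2) (n := n)
  refine ⟨m, hm, Nat.not_even_iff_odd.mp ?_⟩
  rintro ⟨r, rfl⟩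
  exact pow_succ_padicValNat_not_dvd (p := 2) hn ⟨r, hm.trans (by ring)⟩

theorem sum_range_mul_add_eq_zero {w : ℕ → ZMod 2} {n t d u v : ℕ} (ht : t = d * u)
    (hn : n = d * v) (hu : Odd u) (hv : Even v) (hwn : Periodic w n) (hwt : Periodic w (2 * t)) :
    ∑ k ∈ range n, w k * w (k + t) = 0 := by
  have hperiod_n : Periodic (fun k => w k * w (k + t)) n := fun k => by
    simp only [add_right_comm k n t, hwn _]
  have hperiod_t : Periodic (fun k => w k * w (k + t)) t := fun k => by
    show w (k + t) * w (k + t + t) = w k * w (k + t)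
    rw [add_assoc, ← two_mul, hwt k, mul_comm]
  have key := hperiod_n.nsmul_sum_range_eq hperiod_t (a := u) (b := v) (by rw [ht, hn]; ring)
  rwa [nsmul_eq_mul, nsmul_eq_mul, (ZMod.natCast_eq_one_iff_odd).mpr hu,
    (ZMod.natCast_eq_zero_iff_even).mpr hv, one_mul, zero_mul] at key

theorem exists_periodic_sum_range_mul_add_eq_one {n t d m : ℕ} (hd : d ≠ 0) (hn : n = d * m)
    (hm : Odd m) (hdt : d ∣ t) :
    ∃ w : ℕ → ZMod 2,
      Periodic w n ∧ Periodic w (2 * t) ∧ ∑ k ∈ range n, w k * w (k + t) = 1 := by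
  obtain ⟨s, rfl⟩ := hdt
  let w : ℕ → ZMod 2 := fun k => if d ∣ k then 1 else 0
  have hwd : Periodic w d := fun k => by simp only [w, Nat.dvd_add_self_right]
  have hwt : Periodic w (d * s) := by simpa [mul_comm] using hwd.nat_mul s
  refine ⟨w, by simpa [hn, mul_comm] using hwd.nat_mul m,
    by simpa [mul_left_comm] using hwt.nat_mul 2, ?_⟩
  have hterm (k : ℕ) : w k * w (k + d * s) = w k := by
    rw [hwt k]; by_cases hk : d ∣ k <;> simp [w, hk]
  have hsum_d : ∑ k ∈ range d, w k = 1 := by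
    rw [sum_eq_single_of_mem 0 (mem_range.mpr (Nat.pos_of_ne_zero hd))]
    · simp [w]
    · exact fun k hk hk0 =>
        if_neg fun hdk => hk0 (Nat.eq_zero_of_dvd_of_lt hdk (mem_range.mp hk))
  simp only [hterm, hn, hwd.sum_range_mul_eq_nsmul, hsum_d, nsmul_eq_mul, mul_one,
    (ZMod.natCast_eq_one_iff_odd).mpr hm]

theorem exists_periodic_sum_range_mul_add_eq_one_iff {n t : ℕ} (hn : n ≠ 0) (ht : t ≠ 0) :
    (∃ w : ℕ → ZMod 2,
        Periodic w n ∧ Periodic w (2 * t) ∧ ∑ k ∈ range n, w k * w (k + t) = 1) ↔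
      ¬ 2 ^ (padicValNat 2 t + 1) ∣ n := by
  refine ⟨fun ⟨w, hwn, hwt, hsum⟩ ⟨v, hv⟩ => ?_, fun hndvd => ?_⟩
  · obtain ⟨u, hu, hu_odd⟩ := exists_eq_two_pow_padicValNat_mul_odd ht
    have hn' : n = 2 ^ padicValNat 2 t * (2 * v) := by rw [hv, pow_succ, mul_assoc]
    rw [sum_range_mul_add_eq_zero hu hn' hu_odd (even_two_mul v) hwn hwt] at hsum
    exact zero_ne_one hsum
  · obtain ⟨m, hm, hm_odd⟩ := exists_eq_two_pow_padicValNat_mul_odd hn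
    have hle : padicValNat 2 n ≤ padicValNat 2 t := by
      rw [padicValNat_dvd_iff_le hn, not_le] at hndvd
      omega
    exact exists_periodic_sum_range_mul_add_eq_one (by positivity) hm hm_odd
      ((pow_dvd_pow 2 hle).trans pow_padicValNat_dvd)

section Mrs

variable {n : ℕ} [NeZero n] (t : ℕ)

theorem mrs_apply (x : Fin n → ZMod 2) : mrs n t x = ∑ j : Fin n, x j * x (j + t) := by
  refine sum_congr rfl fun j _ => congrArg (x j * x ·) (Fin.ext ?_)
  simp only [Fin.val_add, Fin.val_natCast, Nat.add_mod_mod]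

theorem mrs_eq_sum_range (z : Fin n → ZMod 2) :
    mrs n t z = ∑ k ∈ range n, z (k : ℕ) * z ((k + t : ℕ) : Fin n) := by
  rw [← Fin.sum_univ_eq_sum_range (fun k => z (k : ℕ) * z ((k + t : ℕ) : Fin n))]
  refine sum_congr rfl fun j _ => ?_
  simp only [Fin.cast_val_eq_self]
  congr 2

theorem polar_mrs (x z : Fin n → ZMod 2) :
    polar (mrs n t) x z = ∑ j, x j * (z (j + t) + z (j - t)) := by
  have hshift : ∑ j : Fin n, z j * x (j + t) = ∑ j, x j * z (j - t) :=
    Fintype.sum_equiv (Equiv.addRight (t : Fin n)) _ _ fun j => by simp [mul_comm]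
  have hexpand :
      mrs n t (x + z) = mrs n t x + mrs n t z + ∑ j, x j * (z (j + t) + z (j - t)) := by
    simp only [mrs_apply, Pi.add_apply, mul_add, add_mul, sum_add_distrib, hshift]
    ring
  rw [polar, hexpand, add_right_comm _ _ (mrs n t x), add_comm (mrs n t x),
    CharTwo.add_cancel_right, add_comm, CharTwo.add_cancel_left]

theorem polar_mrs_add_left (z x y : Fin n → ZMod 2) :
    polar (mrs n t) (x + y) z = polar (mrs n t) x z + polar (mrs n t) y z := by
  simp only [polar_mrs, Pi.add_apply, add_mul, sum_add_distrib]

theorem mem_radical_mrs_iff (z : Fin n → ZMod 2) :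
    z ∈ radical (mrs n t) ↔ ∀ j, z (j + t) = z (j - t) := by
  simp only [radical, mem_filter, mem_univ, true_and, polar_mrs]
  refine ⟨fun h j => CharTwo.add_eq_zero.mp ?_, fun h x => ?_⟩
  · simpa [Pi.single_apply] using h (Pi.single j 1)
  · simp [h, CharTwo.add_self_eq_zero]

theorem mem_radical_mrs_iff_periodic (z : Fin n → ZMod 2) :
    z ∈ radical (mrs n t) ↔ Periodic (fun k : ℕ => z k) (2 * t) := by
  rw [mem_radical_mrs_iff]
  refine ⟨fun h k => ?_, fun h j => ?_⟩
  · simpa [two_mul, ← add_assoc] using h (k + t)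
  · have := h (j - t : Fin n).val
    simp_all [two_mul, ← add_assoc]

theorem exists_mem_radical_mrs_eq_one_iff :
    (∃ z ∈ radical (mrs n t), mrs n t z = 1) ↔
      ∃ w : ℕ → ZMod 2,
        Periodic w n ∧ Periodic w (2 * t) ∧ ∑ k ∈ range n, w k * w (k + t) = 1 := by
  refine ⟨fun ⟨z, hz, hz1⟩ => ?_, fun ⟨w, hwn, hwt, hsum⟩ => ?_⟩
  · refine ⟨fun k => z k, fun k => by simp, (mem_radical_mrs_iff_periodic t z).mp hz, ?_⟩
    rwa [← mrs_eq_sum_range]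
  · let z : Fin n → ZMod 2 := fun j => w j
    have hzw (k : ℕ) : z k = w k := by simp [z, Fin.val_natCast, hwn.map_mod_nat]
    refine ⟨z, (mem_radical_mrs_iff_periodic t z).mpr (by simpa only [hzw] using hwt), ?_⟩
    simpa only [mrs_eq_sum_range, hzw] using hsum

end Mrs

theorem mrs_balanced_iff_general (t n : ℕ) (ht : 1 ≤ t) :
    (wtB (mrs n t) = 2 ^ (n - 1) ↔ ¬ (2 ^ (padicValNat 2 t + 1) ∣ n)) ∧
    (Odd n → wtB (mrs n t) = 2 ^ (n - 1)) := by
  rcases Nat.eq_zero_or_pos n with rfl | hn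
  · simp [wtB, mrs]
  have : NeZero n := ⟨hn.ne'⟩
  have hbalanced : wtB (mrs n t) = 2 ^ (n - 1) ↔ ¬ 2 ^ (padicValNat 2 t + 1) ∣ n := by
    rw [wtB_eq_two_pow_pred_iff hn.ne', walshSum_eq_zero_iff (polar_mrs_add_left t),
      exists_mem_radical_mrs_eq_one_iff,
      exists_periodic_sum_range_mul_add_eq_one_iff hn.ne' (by omega)]
  exact ⟨hbalanced, fun hodd => hbalanced.mpr fun hdvd =>
    hodd.not_two_dvd_nat ((dvd_pow_self 2 (Nat.succ_ne_zero _)).trans hdvd)⟩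

/-- `(0,t)_n` is balanced iff `2^(ν(t)+1)` does not divide `n`; in particular it is
balanced whenever `n` is odd. -/
theorem mrs_balanced_iff (t n : ℕ) (ht : 1 ≤ t) (hn : 2 * t + 1 ≤ n) :
    (wtB (mrs n t) = 2 ^ (n - 1) ↔ ¬ (2 ^ (padicValNat 2 t + 1) ∣ n)) ∧
    (Odd n → wtB (mrs n t) = 2 ^ (n - 1)) :=
  mrs_balanced_iff_general t n ht
end

section
/- Let S be a nonempty finite set of positive integers with largest element J. For n ≥ 2J+1 define A_n(X) = ∑_{i∈S} (X^i + X^(n−i)) in (ZMod 2)[X] and v(n) = deg gcd(X^n − 1, A_n(X)). Then there exists a positive integer K such that: (i) v(n + K) = v(n) for all n ≥ 2J+1; (ii) for all n ≥ 2J+1, v(n) = 2J if and only if K divides n; and (iii) for all integers t ≥ 1 and r ≥ 1 with tK − r ≥ 2J+1, v(tK + r) = v(tK − r); i.e., the period of v-values has a unique largest entry 2J and is symmetric about the multiples of K. -/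
/-!
Multiplying `A_n = ∑_{i∈S}(X^i + X^(n-i))` by the unit `X^J` modulo `X^n - 1` turns it into the
polynomial `C = ∑_{i∈S}(X^(J+i) + X^(J-i))`, which does not depend on `n`, is monic of degree `2J`
and has constant term `1`. Hence `v(n) = deg gcd(X^n - 1, C)`. Let `K` be the multiplicative order
of `X` modulo `C`, which is finite since `X` is a unit in the finite ring `𝔽₂[X]/(C)`. Every divisor
of `C` divides `X^K - 1`, so it divides `X^n - 1` exactly when it divides `X^gcd(n,K) - 1`; thus
`v(n)` only depends on `gcd(n, K)`, which is invariant under `n ↦ n + K` and under `tK - r ↦ tK + r`.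
Finally `v(n) = 2J = deg C` exactly when `C ∣ X^n - 1`, i.e. when `K ∣ n`.
-/

open Polynomial

/-- The `v`-value of the RS quadratic function with index set `S`:
`v(n) = deg gcd(X^n - 1, ∑_{i∈S}(X^i + X^(n-i)))` over `ZMod 2`. -/
noncomputable def vVal (S : Finset ℕ) (n : ℕ) : ℕ :=
  (EuclideanDomain.gcd ((X : (ZMod 2)[X]) ^ n - 1)
    (∑ i ∈ S, ((X : (ZMod 2)[X]) ^ i + (X : (ZMod 2)[X]) ^ (n - i)))).natDegree

open AdjoinRoot

section CommRing

variable {R : Type*} [CommRing R] {f : R[X]} {k n : ℕ}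

theorem dvd_X_pow_sub_one_iff_root_pow_eq_one : f ∣ X ^ n - 1 ↔ root f ^ n = 1 := by
  rw [← mk_eq_zero, map_sub, map_pow, mk_X, map_one, sub_eq_zero]

theorem dvd_X_pow_sub_one_iff_orderOf_root_dvd : f ∣ X ^ n - 1 ↔ orderOf (root f) ∣ n :=
  dvd_X_pow_sub_one_iff_root_pow_eq_one.trans orderOf_dvd_iff_pow_eq_one.symm

theorem dvd_X_pow_sub_one_iff_dvd_X_pow_gcd_sub_one (hk : f ∣ X ^ k - 1) :
    f ∣ X ^ n - 1 ↔ f ∣ X ^ n.gcd k - 1 := by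
  rw [dvd_X_pow_sub_one_iff_root_pow_eq_one] at hk ⊢
  rw [dvd_X_pow_sub_one_iff_root_pow_eq_one, pow_gcd_eq_one]
  exact (and_iff_left hk).symm

theorem isUnit_root_of_isUnit_coeff_zero (h : IsUnit (f.coeff 0)) : IsUnit (root f) := by
  obtain ⟨q, hq⟩ := X_dvd_sub_C (p := f)
  have hmul : root f * mk f q = -of f (f.coeff 0) := by
    rw [← mk_X, ← map_mul, ← hq, map_sub, mk_self, mk_C, zero_sub]
  exact isUnit_of_mul_isUnit_left (hmul ▸ (h.map (of f)).neg)

theorem orderOf_root_pos [Finite R] (hf : f.Monic) (h : IsUnit (f.coeff 0)) :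
    0 < orderOf (root f) := by
  have := hf.finite_adjoinRoot
  have : Finite (AdjoinRoot f) := Module.finite_of_finite R
  exact (isUnit_root_of_isUnit_coeff_zero h).isOfFinOrder.orderOf_pos

theorem isCoprime_X_pow_X_pow_sub_one (j : ℕ) (hn : n ≠ 0) :
    IsCoprime (X ^ j : R[X]) (X ^ n - 1) := by
  obtain ⟨m, rfl⟩ := Nat.exists_eq_succ_of_ne_zero hn
  exact IsCoprime.pow_left ⟨X ^ m, -1, by rw [pow_succ]; ring⟩

end CommRing

section Field

variable {F : Type*} [Field F] [DecidableEq F[X]]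

theorem natDegree_gcd_congr {a b a' b' : F[X]} (h : ∀ d, d ∣ a ∧ d ∣ b ↔ d ∣ a' ∧ d ∣ b') :
    (EuclideanDomain.gcd a b).natDegree = (EuclideanDomain.gcd a' b').natDegree := by
  have gcd_dvd_gcd : ∀ {a b a' b' : F[X]}, (∀ d, d ∣ a ∧ d ∣ b → d ∣ a' ∧ d ∣ b') →
      EuclideanDomain.gcd a b ∣ EuclideanDomain.gcd a' b' := fun h =>
    have ⟨ha', hb'⟩ := h _ ⟨EuclideanDomain.gcd_dvd_left _ _, EuclideanDomain.gcd_dvd_right _ _⟩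
    EuclideanDomain.dvd_gcd ha' hb'
  exact natDegree_eq_of_degree_eq <| degree_eq_degree_of_associated <|
    associated_of_dvd_dvd (gcd_dvd_gcd fun d => (h d).mp) (gcd_dvd_gcd fun d => (h d).mpr)

theorem natDegree_gcd_eq_of_mul_eq_add_mul {m a b c u : F[X]} (hu : IsCoprime u m)
    (h : u * a = c + m * b) :
    (EuclideanDomain.gcd m a).natDegree = (EuclideanDomain.gcd m c).natDegree :=
  natDegree_gcd_congr fun d => and_congr_right fun hdm => by
    constructor
    · intro hda
      rw [show c = u * a - m * b by rw [h]; ring]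
      exact dvd_sub (hda.mul_left u) (hdm.mul_right b)
    · intro hdc
      refine (hu.of_isCoprime_of_dvd_right hdm).symm.dvd_of_dvd_mul_left ?_
      rw [h]
      exact dvd_add hdc (hdm.mul_right b)

theorem natDegree_gcd_X_pow_sub_one_eq {f : F[X]} {k : ℕ} (hk : f ∣ X ^ k - 1) (n : ℕ) :
    (EuclideanDomain.gcd (X ^ n - 1) f).natDegree =
      (EuclideanDomain.gcd (X ^ n.gcd k - 1) f).natDegree :=
  natDegree_gcd_congr fun _ => and_congr_left fun hdf =>
    dvd_X_pow_sub_one_iff_dvd_X_pow_gcd_sub_one (hdf.trans hk)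

theorem natDegree_gcd_eq_natDegree_right_iff {a b : F[X]} (hb : b ≠ 0) :
    (EuclideanDomain.gcd a b).natDegree = b.natDegree ↔ b ∣ a := by
  constructor
  · intro h
    exact (associated_of_dvd_of_natDegree_le (EuclideanDomain.gcd_dvd_right a b) hb
      h.ge).symm.dvd.trans (EuclideanDomain.gcd_dvd_left a b)
  · intro h
    exact natDegree_eq_of_degree_eq <| degree_eq_degree_of_associated <| associated_of_dvd_dvd
      (EuclideanDomain.gcd_dvd_right a b) (EuclideanDomain.dvd_gcd h dvd_rfl)

end Field

/-- For every `n ≥ J`, this is `X^J * ∑_{i∈S}(X^i + X^(n-i))` modulo `X^n - 1`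
(`X_pow_mul_sum_eq`). -/
noncomputable def centeredSum (R : Type*) [CommSemiring R] (S : Finset ℕ) (J : ℕ) : R[X] :=
  ∑ i ∈ S, (X ^ (J + i) + X ^ (J - i))

section CenteredSum

variable {R : Type*} {S : Finset ℕ} {J : ℕ}

theorem X_pow_mul_sum_eq [CommRing R] {n : ℕ} (hSJ : ∀ i ∈ S, i ≤ J) (hJn : J ≤ n) :
    X ^ J * ∑ i ∈ S, ((X : R[X]) ^ i + X ^ (n - i)) =
      centeredSum R S J + (X ^ n - 1) * ∑ i ∈ S, X ^ (J - i) := by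
  simp only [centeredSum, Finset.mul_sum, ← Finset.sum_add_distrib]
  refine Finset.sum_congr rfl fun i hi => ?_
  have hexp : J + (n - i) = n + (J - i) := by have := hSJ i hi; omega
  rw [mul_add, ← pow_add, ← pow_add, hexp, pow_add]
  ring

theorem natDegree_centeredSum_le [CommSemiring R] (hSJ : ∀ i ∈ S, i ≤ J) :
    (centeredSum R S J).natDegree ≤ 2 * J :=
  natDegree_sum_le_of_forall_le _ _ fun i hi => by
    have := hSJ i hi
    exact (natDegree_add_le _ _).trans <|
      max_le ((natDegree_X_pow_le _).trans (by omega)) ((natDegree_X_pow_le _).trans (by omega))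

variable [CommSemiring R] (hJS : J ∈ S) (hSJ : ∀ i ∈ S, i ≤ J) (hJ : 0 < J)
include hJS hSJ hJ

theorem coeff_centeredSum_zero : (centeredSum R S J).coeff 0 = 1 := by
  simp only [centeredSum, finsetSum_coeff, coeff_add, coeff_X_pow]
  rw [Finset.sum_eq_single_of_mem J hJS fun i hi hiJ => by
    have := hSJ i hi; rw [if_neg (by omega), if_neg (by omega), add_zero]]
  rw [if_neg (by omega), if_pos (by omega), zero_add]

theorem coeff_centeredSum_two_mul : (centeredSum R S J).coeff (2 * J) = 1 := by
  simp only [centeredSum, finsetSum_coeff, coeff_add, coeff_X_pow]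
  rw [Finset.sum_eq_single_of_mem J hJS fun i hi hiJ => by
    have := hSJ i hi; rw [if_neg (by omega), if_neg (by omega), add_zero]]
  rw [if_pos (by omega), if_neg (by omega), add_zero]

theorem monic_centeredSum : (centeredSum R S J).Monic :=
  monic_of_natDegree_le_of_coeff_eq_one _ (natDegree_centeredSum_le hSJ)
    (coeff_centeredSum_two_mul hJS hSJ hJ)

theorem natDegree_centeredSum [Nontrivial R] : (centeredSum R S J).natDegree = 2 * J :=
  natDegree_eq_of_le_of_coeff_ne_zero (natDegree_centeredSum_le hSJ)
    (by rw [coeff_centeredSum_two_mul hJS hSJ hJ]; exact one_ne_zero)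

end CenteredSum

theorem vVal_eq_natDegree_gcd_centeredSum {S : Finset ℕ} {J n : ℕ} (hSJ : ∀ i ∈ S, i ≤ J)
    (hJn : J < n) :
    vVal S n = (EuclideanDomain.gcd (X ^ n - 1) (centeredSum (ZMod 2) S J)).natDegree :=
  natDegree_gcd_eq_of_mul_eq_add_mul (isCoprime_X_pow_X_pow_sub_one J (by omega))
    (X_pow_mul_sum_eq hSJ hJn.le)

/-- The sequence of `v`-values is periodic with a unique largest entry `2J` occurring
exactly at the multiples of the period `K`, and is symmetric about those multiples. -/
theorem v_value_period_symmetric (S : Finset ℕ) (hS : S.Nonempty)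
    (hpos : ∀ i ∈ S, 1 ≤ i) (J : ℕ) (hJ : J = S.max' hS) :
    ∃ K : ℕ, 1 ≤ K ∧
      (∀ n, 2 * J + 1 ≤ n → vVal S (n + K) = vVal S n) ∧
      (∀ n, 2 * J + 1 ≤ n → (vVal S n = 2 * J ↔ K ∣ n)) ∧
      (∀ t r : ℕ, 1 ≤ t → 1 ≤ r → 2 * J + 1 ≤ t * K - r →
        vVal S (t * K + r) = vVal S (t * K - r)) := by
  have hJS : J ∈ S := hJ ▸ S.max'_mem hS
  have hSJ : ∀ i ∈ S, i ≤ J := fun i hi => hJ ▸ S.le_max' i hi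
  have hJpos : 0 < J := hpos J hJS
  set C := centeredSum (ZMod 2) S J
  have hC : C.Monic := monic_centeredSum hJS hSJ hJpos
  have hv (n) (hn : 2 * J + 1 ≤ n) : vVal S n = (EuclideanDomain.gcd (X ^ n - 1) C).natDegree :=
    vVal_eq_natDegree_gcd_centeredSum hSJ (by omega)
  set K := orderOf (root C)
  have hvK (n) (hn : 2 * J + 1 ≤ n) :
      vVal S n = (EuclideanDomain.gcd (X ^ n.gcd K - 1) C).natDegree :=
    (hv n hn).trans <| natDegree_gcd_X_pow_sub_one_eq
      (dvd_X_pow_sub_one_iff_orderOf_root_dvd.mpr dvd_rfl) n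
  refine ⟨K, orderOf_root_pos hC ?_, fun n hn => ?_, fun n hn => ?_, fun t r _ _ h => ?_⟩
  · rw [coeff_centeredSum_zero hJS hSJ hJpos]
    exact isUnit_one
  · rw [hvK n hn, hvK _ (by omega), Nat.gcd_add_self_left]
  · rw [hv n hn, ← natDegree_centeredSum hJS hSJ hJpos (R := ZMod 2),
      natDegree_gcd_eq_natDegree_right_iff hC.ne_zero, dvd_X_pow_sub_one_iff_orderOf_root_dvd]
  · rw [hvK _ (by omega), hvK _ h, Nat.gcd_mul_right_add_left,
      Nat.gcd_mul_right_sub_left (by omega)]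
end

section
/- Let S be a nonempty finite set of positive integers with |S| odd, and let n ≥ 1 be odd. Then the quadratic trace function Q_n(x) = Tr(∑_{i∈S} x^(2^i+1)) on GaloisField 2 n is balanced. -/
/-- The quadratic trace function `Q_n(x) = Tr(∑_{i∈S} x^(2^i+1))` on `GaloisField 2 n`. -/
noncomputable def Qtr (S : Finset ℕ) (n : ℕ) (x : GaloisField 2 n) : ZMod 2 :=
  Algebra.trace (ZMod 2) (GaloisField 2 n) (∑ i ∈ S, x ^ (2 ^ i + 1))

/-- `g` is balanced if it takes the value `1` exactly `2^(n-1)` times. -/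
noncomputable def BalancedG (n : ℕ) (g : GaloisField 2 n → ZMod 2) : Prop :=
  Nat.card {x : GaloisField 2 n // g x = 1} = 2 ^ (n - 1)

/-- The Frobenius as an algebra equivalence over `ZMod 2`. -/
noncomputable def frobAE (n : ℕ) : GaloisField 2 n ≃ₐ[ZMod 2] GaloisField 2 n :=
  AlgEquiv.ofRingEquiv (f := frobeniusEquiv (GaloisField 2 n) 2) (fun c => by
    rw [frobeniusEquiv_apply, frobenius_def, ← map_pow]
    congr 1
    rw [show ∀ d : ZMod 2, d ^ 2 = d from by decide])

lemma trace_sq (n : ℕ) (x : GaloisField 2 n) :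
    Algebra.trace (ZMod 2) (GaloisField 2 n) (x ^ 2) =
      Algebra.trace (ZMod 2) (GaloisField 2 n) x := by
  have := Algebra.trace_eq_of_algEquiv (frobAE n) x
  rwa [show (frobAE n) x = x ^ 2 from rfl] at this

lemma trace_pow_pow (n i : ℕ) (x : GaloisField 2 n) :
    Algebra.trace (ZMod 2) (GaloisField 2 n) (x ^ 2 ^ i) =
      Algebra.trace (ZMod 2) (GaloisField 2 n) x := by
  induction i with
  | zero => simp
  | succ i ih =>
    rw [pow_succ, pow_mul, trace_sq, ih]

lemma odd_smul_zmod2 {c : ℕ} (hc : Odd c) (a : ZMod 2) : c • a = a := by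
  rw [nsmul_eq_mul]
  obtain ⟨k, rfl⟩ := hc
  push_cast
  rw [show (2 : ZMod 2) = 0 from by decide]
  ring

lemma Qtr_add_one (S : Finset ℕ) (hodd : Odd S.card) (n : ℕ) (hn : n ≠ 0) (hnodd : Odd n)
    (x : GaloisField 2 n) : Qtr S n (x + 1) = Qtr S n x + 1 := by
  have key : ∀ i : ℕ, (x + 1) ^ (2 ^ i + 1) =
      x ^ (2 ^ i + 1) + (x ^ 2 ^ i + x + 1) := by
    intro i
    rw [pow_succ, add_pow_char_pow, one_pow]
    ring
  unfold Qtr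
  simp_rw [key, Finset.sum_add_distrib, map_add]
  congr 1
  have h1 : Algebra.trace (ZMod 2) (GaloisField 2 n) 1 = 1 := by
    have h := Algebra.trace_algebraMap (R := ZMod 2) (S := GaloisField 2 n) 1
    rw [map_one] at h
    rw [h, GaloisField.finrank 2 hn]
    exact odd_smul_zmod2 hnodd 1
  rw [map_sum]
  simp_rw [trace_pow_pow]
  rw [Finset.sum_const, Finset.sum_const, Finset.sum_const, map_nsmul, map_nsmul,
    odd_smul_zmod2 hodd, odd_smul_zmod2 hodd, h1]
  exact (by decide : ∀ a : ZMod 2, a + a + 1 = 1) _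

/-- A sum of an odd number of trace terms is balanced when `n` is odd. -/
theorem odd_terms_odd_n_balanced (S : Finset ℕ) (hS : S.Nonempty)
    (hpos : ∀ i ∈ S, 1 ≤ i) (hodd : Odd S.card) (n : ℕ) (hn : 1 ≤ n) (hnodd : Odd n) :
    BalancedG n (Qtr S n) := by
  classical
  have hn0 : n ≠ 0 := by omega
  set Q := Qtr S n with hQ
  have hkey : ∀ x, Q (x + 1) = Q x + 1 := Qtr_add_one S hodd n hn0 hnodd
  have hchar : ∀ x : GaloisField 2 n, x + 1 + 1 = x := by
    intro x
    have : (1 : GaloisField 2 n) + 1 = 0 := by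
      have := CharP.cast_eq_zero (GaloisField 2 n) 2
      push_cast at this
      linear_combination this
    rw [add_assoc, this, add_zero]
  have hzm : ∀ a : ZMod 2, a ≠ 1 ↔ a = 0 := by decide
  -- bijection between {Q = 1} and {Q ≠ 1}
  let e : {x : GaloisField 2 n // Q x = 1} ≃ {x : GaloisField 2 n // ¬ Q x = 1} :=
    { toFun := fun p => ⟨p.1 + 1, by
        rw [hkey, p.2]; decide⟩
      invFun := fun p => ⟨p.1 + 1, by
        have h0 : Q p.1 = 0 := (hzm _).1 p.2
        rw [hkey, h0, zero_add]⟩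
      left_inv := fun p => by
        ext; exact hchar p.1
      right_inv := fun p => by
        ext; exact hchar p.1 }
  have hcard : Nat.card {x : GaloisField 2 n // Q x = 1} =
      Nat.card {x : GaloisField 2 n // ¬ Q x = 1} := Nat.card_congr e
  have htot : Nat.card {x : GaloisField 2 n // Q x = 1} +
      Nat.card {x : GaloisField 2 n // ¬ Q x = 1} = Nat.card (GaloisField 2 n) := by
    have := Nat.card_congr (Equiv.sumCompl (fun x : GaloisField 2 n => Q x = 1))
    rw [Nat.card_sum] at this
    exact this
  rw [GaloisField.card 2 n hn0] at htot
  rw [← hcard] at htot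
  have h2 : 2 ^ n = 2 ^ (n - 1) * 2 := by
    rw [← pow_succ]
    congr 1
    omega
  show Nat.card {x : GaloisField 2 n // Q x = 1} = 2 ^ (n - 1)
  omega
end

section
/- Let S be a nonempty finite set of positive integers with |S| odd, and let n ≥ 1 satisfy ν(n) ≤ ν(i) for every i ∈ S, where ν denotes the 2-adic valuation. Then the quadratic trace function Q_n(x) = Tr(∑_{i∈S} x^(2^i+1)) on GaloisField 2 n is balanced. -/
variable (n : ℕ)

local notation "K" => GaloisField 2 n
local notation "Tr" => Algebra.trace (ZMod 2) (GaloisField 2 n)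

noncomputable def frobAlg : K ≃ₐ[ZMod 2] K :=
  AlgEquiv.ofRingEquiv (f := frobeniusEquiv (GaloisField 2 n) 2) (fun c => by
    rw [frobeniusEquiv_apply, frobenius_def, ← map_pow]
    congr 1
    revert c; decide)

lemma tr_sq (x : K) : Tr (x ^ 2) = Tr x := by
  have h := Algebra.trace_eq_of_algEquiv (frobAlg n) x
  have hx : frobAlg n x = x ^ 2 := rfl
  rw [hx] at h
  exact h

lemma tr_pow_pow (k : ℕ) (x : K) : Tr (x ^ 2 ^ k) = Tr x := by
  induction k with
  | zero => simp
  | succ k ih =>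
    have : x ^ 2 ^ (k + 1) = (x ^ 2 ^ k) ^ 2 := by
      rw [← pow_mul, pow_succ]
    rw [this, tr_sq, ih]

lemma exists_tr_one : ∃ a : K, Tr a = 1 := by
  have : Algebra.IsSeparable (ZMod 2) K := inferInstance
  exact Algebra.trace_surjective (ZMod 2) (GaloisField 2 n) 1

lemma pow_card_self (hn : n ≠ 0) (x : K) : x ^ 2 ^ n = x := by
  cases nonempty_fintype (GaloisField 2 n)
  have hcard : Fintype.card (GaloisField 2 n) = 2 ^ n := by
    rw [← Nat.card_eq_fintype_card, GaloisField.card 2 n hn]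
  rw [← hcard, FiniteField.pow_card]

lemma exists_c (hn : n ≠ 0) (g m : ℕ) (hgm : n = g * m) (hm : Odd m) :
    ∃ c : K, c ^ 2 ^ g = c ∧ Tr c = 1 := by
  obtain ⟨a, ha⟩ := exists_tr_one n
  set f : ℕ → K := fun j => a ^ 2 ^ (g * j) with hf
  refine ⟨∑ j ∈ Finset.range m, f j, ?_, ?_⟩
  · have hfm : f m = f 0 := by
      simp only [hf, Nat.mul_zero, pow_zero, pow_one, ← hgm]
      exact pow_card_self n hn a
    have h1 : (∑ j ∈ Finset.range m, f j) ^ 2 ^ g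
        = ∑ j ∈ Finset.range m, f (j + 1) := by
      rw [sum_pow_char_pow]
      refine Finset.sum_congr rfl fun j _ => ?_
      simp only [hf]
      rw [← pow_mul, ← pow_add, Nat.mul_succ]
    have h2 : ∑ j ∈ Finset.range m, f (j + 1) + f 0
        = ∑ j ∈ Finset.range m, f j + f 0 := by
      rw [← Finset.sum_range_succ', Finset.sum_range_succ, hfm]
    rw [h1, add_right_cancel h2]
  · rw [map_sum]
    have : ∀ j ∈ Finset.range m, Tr (f j) = 1 := fun j _ => by
      rw [hf]; rw [tr_pow_pow n (g * j) a, ha]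
    rw [Finset.sum_congr rfl this, Finset.sum_const, Finset.card_range,
      nsmul_eq_mul, mul_one]
    obtain ⟨k, hk⟩ := hm
    subst hk
    push_cast
    rw [show (2 : ZMod 2) = 0 by decide]
    ring

lemma pow_dvd_fix (g i : ℕ) (hgi : g ∣ i) (c : K) (hc : c ^ 2 ^ g = c) :
    c ^ 2 ^ i = c := by
  obtain ⟨t, rfl⟩ := hgi
  induction t with
  | zero => simp
  | succ t ih =>
    have : (2:K) ^ 0 = 1 := by norm_num
    calc c ^ 2 ^ (g * (t+1)) = (c ^ 2 ^ (g * t)) ^ 2 ^ g := by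
          rw [← pow_mul, ← pow_add, Nat.mul_succ]
      _ = c := by rw [ih, hc]

lemma odd_smul_zmod (k : ℕ) (hk : Odd k) (z : ZMod 2) : k • z = z := by
  obtain ⟨t, rfl⟩ := hk
  rw [add_nsmul, one_nsmul, mul_nsmul, two_nsmul, CharTwo.add_self_eq_zero,
    smul_zero, zero_add]

lemma key_step (S : Finset ℕ) (hodd : Odd S.card) (c : K)
    (hci : ∀ i ∈ S, c ^ 2 ^ i = c) (htr : Tr c = 1) (x : K) :
    Qtr S n (x + c) = Qtr S n x + 1 := by
  have hterm : ∀ i ∈ S, (x + c) ^ (2 ^ i + 1)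
      = x ^ (2 ^ i + 1) + (c * x) ^ 2 ^ i + c * x + c ^ 2 := by
    intro i hi
    have h1 : (x + c) ^ (2 ^ i + 1) = (x ^ 2 ^ i + c) * (x + c) := by
      rw [pow_succ, add_pow_char_pow, hci i hi]
    have h2 : (c * x) ^ 2 ^ i = c * x ^ 2 ^ i := by
      rw [mul_pow, hci i hi]
    rw [h1, h2, pow_succ]
    ring
  unfold Qtr
  rw [Finset.sum_congr rfl hterm]
  simp only [Finset.sum_add_distrib, Finset.sum_const]
  rw [map_add, map_add, map_add, map_sum, map_sum, map_nsmul, map_nsmul]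
  have h3 : ∀ i ∈ S, Tr ((c * x) ^ 2 ^ i) = Tr (c * x) := fun i _ =>
    tr_pow_pow n i (c * x)
  rw [Finset.sum_congr rfl h3, Finset.sum_const, odd_smul_zmod _ hodd,
    odd_smul_zmod _ hodd]
  have h4 : Tr (c ^ 2) = 1 := by rw [tr_sq, htr]
  rw [h4]
  have h5 : ∀ a b : ZMod 2, b + a + a + 1 = b + 1 := by decide
  exact h5 _ _


/-- If `S` has an odd number of elements and `ν(n) ≤ ν(i)` for all `i ∈ S`,
then `Q_n` is balanced. -/
theorem odd_terms_low_valuation_balanced (S : Finset ℕ) (hS : S.Nonempty)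
    (hpos : ∀ i ∈ S, 1 ≤ i) (hodd : Odd S.card) (n : ℕ) (hn : 1 ≤ n)
    (hval : ∀ i ∈ S, padicValNat 2 n ≤ padicValNat 2 i) :
    BalancedG n (Qtr S n) := by
  classical
  have hn0 : n ≠ 0 := by omega
  set g := Nat.gcd (S.gcd id) n with hg
  have hg_dvd_n : g ∣ n := Nat.gcd_dvd_right _ _
  have hg_pos : 0 < g := Nat.gcd_pos_of_pos_right _ (by omega)
  have hg_dvd_i : ∀ i ∈ S, g ∣ i := fun i hi =>
    dvd_trans (Nat.gcd_dvd_left _ _) (Finset.gcd_dvd hi)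
  set m := n / g with hm
  have hgm : n = g * m := (Nat.mul_div_cancel' hg_dvd_n).symm
  -- m is odd
  have hv : (2:ℕ) ^ padicValNat 2 n ∣ g := by
    refine Nat.dvd_gcd (Finset.dvd_gcd fun i hi => ?_) pow_padicValNat_dvd
    exact dvd_trans (pow_dvd_pow 2 (hval i hi)) pow_padicValNat_dvd
  have hm_odd : Odd m := by
    by_contra hcon
    rw [Nat.not_odd_iff_even] at hcon
    have h2 : (2:ℕ) ^ (padicValNat 2 n + 1) ∣ n := by
      rw [pow_succ]
      calc 2 ^ padicValNat 2 n * 2 ∣ g * m := mul_dvd_mul hv hcon.two_dvd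
        _ = n := hgm.symm
    exact pow_succ_padicValNat_not_dvd hn0 h2
  obtain ⟨c, hc_pow, hc_tr⟩ := exists_c n hn0 g m hgm hm_odd
  have hci : ∀ i ∈ S, c ^ 2 ^ i = c := fun i hi =>
    pow_dvd_fix n g i (hg_dvd_i i hi) c hc_pow
  have key : ∀ x : GaloisField 2 n, Qtr S n (x + c) = Qtr S n x + 1 :=
    key_step n S hodd c hci hc_tr
  have hinv : ∀ x : GaloisField 2 n, x + c + c = x := fun x => by
    rw [add_assoc, CharTwo.add_self_eq_zero, add_zero]
  let e : {x : GaloisField 2 n // Qtr S n x = 1} ≃ {x : GaloisField 2 n // ¬ Qtr S n x = 1} :=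
    { toFun := fun x => ⟨x.1 + c, by rw [key, x.2]; decide⟩
      invFun := fun y => ⟨y.1 + c, by
        rw [key]
        have : Qtr S n y.1 = 0 := by
          have := y.2
          revert this
          generalize Qtr S n y.1 = z
          revert z; decide
        rw [this]; decide⟩
      left_inv := fun x => Subtype.ext (hinv x.1)
      right_inv := fun y => Subtype.ext (hinv y.1) }
  cases nonempty_fintype (GaloisField 2 n)
  have hcardK : Fintype.card (GaloisField 2 n) = 2 ^ n := by
    rw [← Nat.card_eq_fintype_card, GaloisField.card 2 n hn0]
  have hcompl : Fintype.card {x : GaloisField 2 n // ¬ Qtr S n x = 1}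
      = 2 ^ n - Fintype.card {x : GaloisField 2 n // Qtr S n x = 1} := by
    rw [Fintype.card_subtype_compl, hcardK]
  have hEq : Fintype.card {x : GaloisField 2 n // Qtr S n x = 1}
      = Fintype.card {x : GaloisField 2 n // ¬ Qtr S n x = 1} :=
    Fintype.card_congr e
  unfold BalancedG
  rw [Nat.card_eq_fintype_card]
  have hpow : (2:ℕ) ^ n = 2 * 2 ^ (n - 1) := by
    rw [← pow_succ']
    congr 1
    omega
  omega
end

section
/- Let S be a nonempty finite set of positive integers with J = max S, let P(X) = ∑_{i∈S} (X^(J+i) + X^(J−i)) in (ZMod 2)[X], and let d_Q be the multiplicity of 1 as a root of P. If ν ≥ 0 and 2^ν ≤ d_Q, then for n = 2^ν the quadratic trace function Q_n(x) = Tr(∑_{i∈S} x^(2^i+1)) on GaloisField 2 n is not balanced if and only if Q_n(x) = 0 for every x ∈ GaloisField 2 n. -/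
open Polynomial

theorem Polynomial.X_pow_sub_one_dvd_of_le_rootMultiplicity {R : Type*} [CommRing R] {p : ℕ}
    [Fact p.Prime] [CharP R p] {P : R[X]} {ν : ℕ} (hν : p ^ ν ≤ P.rootMultiplicity 1) :
    X ^ p ^ ν - 1 ∣ P := by
  have h := (pow_dvd_pow (X - C 1) hν).trans (P.pow_rootMultiplicity_dvd 1)
  rwa [map_one, sub_pow_char_pow, one_pow] at h

namespace FiniteField

variable {K L : Type*} [Field K] [Fintype K]

theorem frobeniusAlgHom_pow_apply [CommRing L] [Algebra K L] (k : ℕ) (x : L) :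
    ((frobeniusAlgHom K L).toLinearMap ^ k) x = x ^ Fintype.card K ^ k := by
  rw [Module.End.pow_apply, AlgHom.coe_toLinearMap, coe_frobeniusAlgHom, pow_iterate]

variable [Field L] [Algebra K L] [Finite L]

theorem trace_pow_card_pow_s17 (k : ℕ) (z : L) :
    Algebra.trace K L (z ^ Fintype.card K ^ k) = Algebra.trace K L z := by
  induction k with
  | zero => simp
  | succ k ih =>
    rw [pow_succ, pow_mul, ← ih]
    exact Algebra.trace_eq_of_algEquiv (frobeniusAlgEquivOfAlgebraic K L) _

theorem aeval_frobeniusAlgHom_eq_zero_of_dvd {P : K[X]} (hP : X ^ Module.finrank K L - 1 ∣ P) :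
    aeval (frobeniusAlgHom K L).toLinearMap P = 0 :=
  minpoly.dvd_iff.mp (minpoly_frobeniusAlgHom K L ▸ hP)

end FiniteField

open FiniteField

section CharTwo

variable {L : Type*} [Field L] [Finite L] [Algebra (ZMod 2) L]

theorem sum_pow_two_pow_eq_zero_of_dvd (S : Finset ℕ) (J : ℕ)
    (hP : X ^ Module.finrank (ZMod 2) L - 1 ∣
      ∑ i ∈ S, ((X : (ZMod 2)[X]) ^ (J + i) + X ^ (J - i)))
    (x : L) : ∑ i ∈ S, (x ^ 2 ^ (J + i) + x ^ 2 ^ (J - i)) = 0 := by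
  simpa [map_sum, frobeniusAlgHom_pow_apply] using
    LinearMap.congr_fun (aeval_frobeniusAlgHom_eq_zero_of_dvd hP) x

theorem trace_sum_add_pow_two_pow_add_one (S : Finset ℕ) {J : ℕ} (hJ : ∀ i ∈ S, i ≤ J)
    (x y : L) :
    Algebra.trace (ZMod 2) L (∑ i ∈ S, (x + y) ^ (2 ^ i + 1)) =
      Algebra.trace (ZMod 2) L (∑ i ∈ S, x ^ (2 ^ i + 1)) +
      Algebra.trace (ZMod 2) L (∑ i ∈ S, y ^ (2 ^ i + 1)) +
      Algebra.trace (ZMod 2) L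
        ((∑ i ∈ S, (x ^ 2 ^ (J + i) + x ^ 2 ^ (J - i))) * y ^ 2 ^ J) := by
  have : CharP L 2 := charP_of_injective_algebraMap' (ZMod 2) 2
  have expand (i : ℕ) : (x + y) ^ (2 ^ i + 1) =
      x ^ (2 ^ i + 1) + y ^ (2 ^ i + 1) + (x ^ 2 ^ i * y + x * y ^ 2 ^ i) := by
    rw [pow_succ, add_pow_char_pow]
    ring
  have cross : ∀ i ∈ S, Algebra.trace (ZMod 2) L (x ^ 2 ^ i * y + x * y ^ 2 ^ i) =
      Algebra.trace (ZMod 2) L ((x ^ 2 ^ (J + i) + x ^ 2 ^ (J - i)) * y ^ 2 ^ J) := by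
    intro i hi
    have h := trace_pow_card_pow_s17 (K := ZMod 2) (L := L)
    rw [ZMod.card] at h
    rw [map_add, add_mul, map_add, ← h J (x ^ 2 ^ i * y), ← h (J - i) (x * y ^ 2 ^ i)]
    simp only [mul_pow, ← pow_mul, ← pow_add, Nat.add_comm i J, Nat.add_sub_cancel' (hJ i hi)]
  rw [Finset.sum_congr rfl fun i _ => expand i, Finset.sum_add_distrib, Finset.sum_add_distrib,
    map_add, map_add, Finset.sum_mul]
  congr 1
  rw [map_sum, map_sum, Finset.sum_congr rfl cross]

end CharTwo

theorem AddMonoidHom.two_mul_card_fiber_one {G : Type*} [AddGroup G] [Fintype G]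
    (f : G →+ ZMod 2) (hf : f ≠ 0) : 2 * Finset.card {x | f x = 1} = Fintype.card G := by
  have hne : ∀ u : ZMod 2, ¬ u = 1 ↔ u = 0 := by decide
  obtain ⟨a, ha⟩ := DFunLike.ne_iff.mp hf
  have h1 : f a = 1 := by_contra fun h => ha ((hne _).mp h)
  classical
  have hfib := AddMonoidHom.card_fiber_eq_of_mem_range f ⟨0, map_zero f⟩ ⟨a, h1⟩
  have hcompl := Finset.card_filter_add_card_filter_not (s := Finset.univ) (fun x => f x = 1)
  simp only [hne] at hcompl
  rw [Finset.card_univ, hfib] at hcompl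
  omega

theorem not_balancedG_iff_eq_zero {n : ℕ} (hn : n ≠ 0) (f : GaloisField 2 n →+ ZMod 2) :
    ¬ BalancedG n f ↔ f = 0 := by
  have := Fintype.ofFinite (GaloisField 2 n)
  classical
  refine ⟨fun hnb => by_contra fun hf => hnb ?_, fun hf hb => ?_⟩
  · have h := f.two_mul_card_fiber_one hf
    rw [Fintype.card_eq_nat_card, GaloisField.card 2 n hn,
      ← Nat.two_pow_pred_mul_two (by omega)] at h
    rw [BalancedG, Nat.card_eq_fintype_card, Fintype.card_subtype]
    omega
  · subst hf
    simp only [BalancedG, AddMonoidHom.zero_apply, zero_ne_one, Nat.card_of_isEmpty] at hb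
    exact (pow_pos two_pos _).ne hb

theorem Qtr_add {S : Finset ℕ} {J n : ℕ} (hJ : ∀ i ∈ S, i ≤ J)
    (hL : ∀ x : GaloisField 2 n, ∑ i ∈ S, (x ^ 2 ^ (J + i) + x ^ 2 ^ (J - i)) = 0)
    (x y : GaloisField 2 n) : Qtr S n (x + y) = Qtr S n x + Qtr S n y := by
  rw [Qtr, trace_sum_add_pow_two_pow_add_one S hJ, hL, zero_mul, map_zero, add_zero, Qtr, Qtr]

theorem unbalanced_iff_zero_of_pow_le_general (S : Finset ℕ) (hS : S.Nonempty)
    (J : ℕ) (hJ : J = S.max' hS)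
    (P : (ZMod 2)[X])
    (hP : P = ∑ i ∈ S, ((X : (ZMod 2)[X]) ^ (J + i) + (X : (ZMod 2)[X]) ^ (J - i)))
    (dQ : ℕ) (hd : dQ = P.rootMultiplicity 1)
    (ν : ℕ) (hν : 2 ^ ν ≤ dQ) :
    ¬ BalancedG (2 ^ ν) (Qtr S (2 ^ ν)) ↔ ∀ x : GaloisField 2 (2 ^ ν), Qtr S (2 ^ ν) x = 0 := by
  have hn : 2 ^ ν ≠ 0 := by positivity
  have hdvd : X ^ Module.finrank (ZMod 2) (GaloisField 2 (2 ^ ν)) - 1 ∣ P := by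
    rw [GaloisField.finrank 2 hn]
    exact X_pow_sub_one_dvd_of_le_rootMultiplicity (hd ▸ hν)
  have hJle : ∀ i ∈ S, i ≤ J := hJ ▸ S.le_max'
  let f := AddMonoidHom.mk' (Qtr S (2 ^ ν))
    (Qtr_add hJle (sum_pow_two_pow_eq_zero_of_dvd S J (hP ▸ hdvd)))
  exact (not_balancedG_iff_eq_zero hn f).trans DFunLike.ext_iff

/-- If `2^ν ≤ d_Q` then `Q_{2^ν}` is unbalanced iff it vanishes identically. -/
theorem unbalanced_iff_zero_of_pow_le (S : Finset ℕ) (hS : S.Nonempty)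
    (hpos : ∀ i ∈ S, 1 ≤ i) (J : ℕ) (hJ : J = S.max' hS)
    (P : (ZMod 2)[X])
    (hP : P = ∑ i ∈ S, ((X : (ZMod 2)[X]) ^ (J + i) + (X : (ZMod 2)[X]) ^ (J - i)))
    (dQ : ℕ) (hd : dQ = P.rootMultiplicity 1)
    (ν : ℕ) (hν : 2 ^ ν ≤ dQ) :
    ¬ BalancedG (2 ^ ν) (Qtr S (2 ^ ν)) ↔ ∀ x : GaloisField 2 (2 ^ ν), Qtr S (2 ^ ν) x = 0 :=
  unbalanced_iff_zero_of_pow_le_general S hS J hJ P hP dQ hd ν hν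
end
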